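/- arXiv:math/0602012 — 9 statements merged into one kernel-verified Lean document; each statement's English description precedes it below -/
import Mathlib

section
/- Let p be a prime, a a positive integer, and 1 <= r <= p-1. Let abar be the smallest positive integer congruent to a modulo p-1. Then the sum over b >= 0 of binomial(a, b*(p-1)+r) is congruent to binomial(abar, r) modulo p. -/
/-!
Write `S_r(n) = ∑_b C(n, b(p-1) + r)`. For a unit `t` of `𝔽_p` we have `t^(p-1) = 1`, so
`(1 + t)^n - 1 = ∑_{r=1}^{p-1} S_r(n) t^r`, and orthogonality `∑_t t^i = -[p - 1 ∣ i]` extracts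
`S_r(n) = -∑_t t^(p-1-r) ((1 + t)^n - 1)` in `𝔽_p`. By Fermat, `(1 + t)^n` depends only on
`n mod (p - 1)` once `n > 0`, so `S_r(a) ≡ S_r(abar)`; as `abar ≤ p - 1`, only the term
`C(abar, r)` of `S_r(abar)` survives.
-/

open Finset

def chooseResidueSum (d n r : ℕ) : ℕ :=
  ∑ b ∈ range (n + 1), n.choose (b * d + r)

theorem chooseResidueSum_eq_choose {d n r : ℕ} (h : n < d + r) :
    chooseResidueSum d n r = n.choose r := by
  rw [chooseResidueSum, sum_eq_single_of_mem 0 (by simp)]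
  · simp
  · intro b _ hb
    apply Nat.choose_eq_zero_of_lt
    nlinarith [Nat.one_le_iff_ne_zero.2 hb]

theorem sum_range_mul_eq_sum_sum {M : Type*} [AddCommMonoid M] (f : ℕ → M) (N d : ℕ) :
    ∑ k ∈ range (N * d), f k = ∑ b ∈ range N, ∑ j ∈ range d, f (b * d + j) := by
  induction N with
  | zero => simp
  | succ N ih => rw [Nat.succ_mul, sum_range_add, ih, sum_range_succ]

theorem one_add_pow_sub_one_eq_sum_range {R : Type*} [CommRing R] (t : R) {n M : ℕ}
    (h : n ≤ M) : (1 + t) ^ n - 1 = ∑ k ∈ range M, (n.choose (k + 1) : R) * t ^ (k + 1) := by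
  have hbinom : (1 + t) ^ n = ∑ k ∈ range (M + 1), (n.choose k : R) * t ^ k := by
    rw [add_comm, add_pow]
    refine (sum_congr rfl fun k _ => by ring).trans
      (sum_subset (range_subset_range.2 (by omega)) fun k _ hkn => ?_)
    rw [Nat.choose_eq_zero_of_lt (by simpa using hkn), Nat.cast_zero, zero_mul]
  rw [hbinom, sum_range_succ']
  simp

namespace FiniteField

variable {K : Type*} [Field K] [Fintype K]

local notation "q" => Fintype.card K

theorem pow_eq_pow_of_modEq (x : K) {m n : ℕ} (hm : 0 < m) (hn : 0 < n)
    (h : m ≡ n [MOD q - 1]) : x ^ m = x ^ n := by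
  rcases eq_or_ne x 0 with rfl | hx
  · rw [zero_pow hm.ne', zero_pow hn.ne']
  have hx1 : x ^ (q - 1) = 1 := pow_card_sub_one_eq_one x hx
  have hfin : IsOfFinOrder x :=
    isOfFinOrder_iff_pow_eq_one.2 ⟨q - 1, Nat.sub_pos_of_lt Fintype.one_lt_card, hx1⟩
  exact hfin.pow_eq_pow_iff_modEq.2 (h.of_dvd (orderOf_dvd_of_pow_eq_one hx1))

theorem one_add_pow_sub_one_eq_sum_chooseResidueSum {t : K} (ht : t ≠ 0) (n : ℕ) :
    (1 + t) ^ n - 1 =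
      ∑ j ∈ range (q - 1), (chooseResidueSum (q - 1) n (j + 1) : K) * t ^ (j + 1) := by
  have hd : 1 ≤ q - 1 := Nat.le_sub_of_add_le Fintype.one_lt_card
  rw [one_add_pow_sub_one_eq_sum_range t (M := (n + 1) * (q - 1)) (by nlinarith),
    sum_range_mul_eq_sum_sum, sum_comm]
  refine sum_congr rfl fun j _ => ?_
  rw [chooseResidueSum, Nat.cast_sum, sum_mul]
  refine sum_congr rfl fun b _ => ?_
  rw [add_assoc, pow_add t, pow_mul', pow_card_sub_one_eq_one t ht, one_pow, one_mul]

theorem sum_units_pow_mul_pow_eq_ite [DecidableEq K] {r j : ℕ} (hr1 : 1 ≤ r) (hr2 : r ≤ q - 1)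
    (hj : j < q - 1) :
    ∑ t : Kˣ, (t : K) ^ (q - 1 - r) * (t : K) ^ (j + 1) = if j + 1 = r then -1 else 0 := by
  have hdvd : q - 1 ∣ q - 1 - r + (j + 1) ↔ j + 1 = r := by
    constructor
    · rintro ⟨c, hc⟩
      have hc2 : c < 2 := Nat.lt_of_mul_lt_mul_left (a := q - 1) (by omega)
      interval_cases c <;> omega
    · rintro rfl
      exact ⟨1, by omega⟩
  simp_rw [← pow_add]
  rw [sum_pow_units, if_congr hdvd rfl rfl]

theorem sum_units_pow_mul_one_add_pow_sub_one [DecidableEq K] {r : ℕ} (hr1 : 1 ≤ r)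
    (hr2 : r ≤ q - 1) (n : ℕ) :
    ∑ t : Kˣ, (t : K) ^ (q - 1 - r) * ((1 + t) ^ n - 1) = -chooseResidueSum (q - 1) n r := by
  have hexpand (t : Kˣ) := one_add_pow_sub_one_eq_sum_chooseResidueSum t.ne_zero n
  calc ∑ t : Kˣ, (t : K) ^ (q - 1 - r) * ((1 + t) ^ n - 1)
      = ∑ j ∈ range (q - 1), (chooseResidueSum (q - 1) n (j + 1) : K) *
          ∑ t : Kˣ, (t : K) ^ (q - 1 - r) * (t : K) ^ (j + 1) := by
        simp_rw [hexpand, mul_sum]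
        rw [sum_comm]
        exact sum_congr rfl fun j _ => sum_congr rfl fun t _ => by ring
    _ = ∑ j ∈ range (q - 1),
          if j + 1 = r then -(chooseResidueSum (q - 1) n (j + 1) : K) else 0 :=
        sum_congr rfl fun j hj => by
          rw [sum_units_pow_mul_pow_eq_ite hr1 hr2 (mem_range.1 hj), mul_ite, mul_neg_one,
            mul_zero]
    _ = -chooseResidueSum (q - 1) n r := by
        rw [sum_eq_single_of_mem (r - 1) (mem_range.2 (by omega)), if_pos (by omega),
          Nat.sub_add_cancel hr1]
        exact fun j _ hj => if_neg (by omega)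

theorem cast_chooseResidueSum_eq_of_modEq {m n r : ℕ} (hm : 0 < m) (hn : 0 < n)
    (h : m ≡ n [MOD q - 1]) (hr1 : 1 ≤ r) (hr2 : r ≤ q - 1) :
    (chooseResidueSum (q - 1) m r : K) = chooseResidueSum (q - 1) n r := by
  classical
  rw [← neg_inj, ← sum_units_pow_mul_one_add_pow_sub_one hr1 hr2,
    ← sum_units_pow_mul_one_add_pow_sub_one hr1 hr2]
  simp_rw [pow_eq_pow_of_modEq _ hm hn h]

end FiniteField

/-- Glaisher's congruence (1899). -/
theorem glaisher (p a r abar : ℕ) (hp : p.Prime) (ha : 0 < a)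
    (hr1 : 1 ≤ r) (hr2 : r ≤ p - 1)
    (habar_pos : 0 < abar) (habar_cong : abar ≡ a [MOD p - 1])
    (habar_min : ∀ m, 0 < m → m ≡ a [MOD p - 1] → abar ≤ m) :
    (∑ b ∈ Finset.range (a + 1), a.choose (b * (p - 1) + r)) ≡ abar.choose r [MOD p] := by
  have : Fact p.Prime := ⟨hp⟩
  have habar_le : abar ≤ p - 1 := by
    by_contra! h
    have := habar_min (abar - (p - 1)) (by omega)
      ((Nat.sub_modulus_modEq_iff h.le).2 habar_cong)
    omega
  have key := FiniteField.cast_chooseResidueSum_eq_of_modEq (K := ZMod p) (r := r) ha habar_pos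
  rw [ZMod.card] at key
  rw [← ZMod.natCast_eq_natCast_iff, ← chooseResidueSum_eq_choose (d := p - 1) (by omega)]
  exact key habar_cong.symm hr1 hr2
end

section
/- Let p be a prime, let a and d be positive integers with p not dividing d, and let r be an integer. Let f be the multiplicative order of p modulo d, and let abar be the smallest positive integer congruent to a modulo p^f - 1. Then the sum over integers b of binomial(a, b*d+r) is congruent modulo p to the sum over integers b of binomial(abar, b*d+r). -/
open Finset

section glaisherAux

variable (p d : ℕ) [Fact p.Prime]

/-- The "cyclotomic" group algebra used in the proof. -/
noncomputable abbrev glaisherU : AddMonoidAlgebra (ZMod p) (ZMod d) :=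
  AddMonoidAlgebra.single 1 1

instance glaisherCharP : CharP (AddMonoidAlgebra (ZMod p) (ZMod d)) p := by
  refine charP_of_injective_ringHom (f := AddMonoidAlgebra.singleZeroRingHom) ?_ p
  intro x y h
  simpa using (AddMonoidAlgebra.single_right_injective (m := (0 : ZMod d))) h

lemma glaisher_coeff_pow (n : ℕ) (s : ZMod d) :
    ((1 + glaisherU p d) ^ n).coeff s
      = ∑ c ∈ range (n + 1), if (c : ZMod d) = s then (n.choose c : ZMod p) else 0 := by
  rw [add_comm, add_pow]
  have hterm : ∀ c : ℕ,
      glaisherU p d ^ c * 1 ^ (n - c) * (n.choose c : AddMonoidAlgebra (ZMod p) (ZMod d))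
        = AddMonoidAlgebra.single (c : ZMod d) (n.choose c : ZMod p) := by
    intro c
    rw [one_pow, mul_one, AddMonoidAlgebra.single_pow, AddMonoidAlgebra.natCast_def,
      AddMonoidAlgebra.single_mul_single]
    simp
  simp_rw [hterm]
  rw [AddMonoidAlgebra.coeff_sum, Finsupp.finset_sum_apply]
  refine Finset.sum_congr rfl fun c _ => ?_
  rw [AddMonoidAlgebra.coeff_single, Finsupp.single_apply]

lemma glaisher_pow_eq (f a abar : ℕ) (hf : ((p ^ f : ℕ) : ZMod d) = 1)
    (hfa : 0 < abar) (hle : abar ≤ a) (hcong : abar ≡ a [MOD p ^ f - 1]) :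
    (1 + glaisherU p d) ^ a = (1 + glaisherU p d) ^ abar := by
  have hp1 : 1 ≤ p ^ f := Nat.one_le_pow _ _ (Fact.out : p.Prime).pos
  have hkey : (1 + glaisherU p d) ^ p ^ f = 1 + glaisherU p d := by
    rw [add_pow_char_pow, one_pow]
    congr 1
    rw [AddMonoidAlgebra.single_pow, one_pow, nsmul_eq_mul, mul_one, hf]
  have hstep : ∀ m : ℕ, 0 < m →
      (1 + glaisherU p d) ^ (m + (p ^ f - 1)) = (1 + glaisherU p d) ^ m := by
    intro m hm
    obtain ⟨m', rfl⟩ : ∃ m', m = m' + 1 := ⟨m - 1, (Nat.succ_pred_eq_of_pos hm).symm⟩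
    have h : m' + 1 + (p ^ f - 1) = m' + p ^ f := by omega
    rw [h, pow_add, hkey, pow_add, pow_one]
  obtain ⟨t, ht⟩ := (Nat.modEq_iff_dvd' hle).mp hcong
  have ha : a = abar + (p ^ f - 1) * t := by omega
  subst ha
  clear ht hcong hle
  induction t with
  | zero => simp
  | succ t ih =>
    have h : abar + (p ^ f - 1) * (t + 1) = (abar + (p ^ f - 1) * t) + (p ^ f - 1) := by ring
    rw [h, hstep _ (by omega), ih]

end glaisherAux

/-- Generalization of Glaisher's congruence: the sum `∑_b binomial(a, b*d+r)` modulo `p`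
only depends on `a` modulo `p^f - 1`, where `f` is the multiplicative order of `p` mod `d`. -/
theorem glaisher_general (p a d f abar : ℕ) (r : ℤ) (hp : p.Prime)
    (ha : 0 < a) (hd : 0 < d) (hpd : ¬ p ∣ d)
    (hf_pos : 0 < f) (hf_ord : p ^ f ≡ 1 [MOD d])
    (hf_min : ∀ g, 0 < g → p ^ g ≡ 1 [MOD d] → f ≤ g)
    (habar_pos : 0 < abar) (habar_cong : abar ≡ a [MOD p ^ f - 1])
    (habar_min : ∀ m, 0 < m → m ≡ a [MOD p ^ f - 1] → abar ≤ m) :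
    (∑ c ∈ Finset.range (a + 1), if (d : ℤ) ∣ (c : ℤ) - r then (a.choose c : ℤ) else 0)
      ≡ (∑ c ∈ Finset.range (abar + 1),
          if (d : ℤ) ∣ (c : ℤ) - r then (abar.choose c : ℤ) else 0) [ZMOD p] := by
  haveI : Fact p.Prime := ⟨hp⟩
  haveI : NeZero d := ⟨hd.ne'⟩
  rw [← ZMod.intCast_eq_intCast_iff]
  have hs : ∀ n : ℕ,
      ((∑ c ∈ Finset.range (n + 1),
          if (d : ℤ) ∣ (c : ℤ) - r then (n.choose c : ℤ) else 0 : ℤ) : ZMod p)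
        = ((1 + glaisherU p d) ^ n).coeff ((r : ZMod d)) := by
    intro n
    rw [glaisher_coeff_pow, Int.cast_sum]
    refine Finset.sum_congr rfl fun c _ => ?_
    have hcond : ((c : ZMod d) = ((r : ZMod d))) ↔ (d : ℤ) ∣ (c : ℤ) - r := by
      rw [← Int.cast_natCast, ← sub_eq_zero, ← Int.cast_sub,
        ZMod.intCast_zmod_eq_zero_iff_dvd]
    by_cases h : (d : ℤ) ∣ (c : ℤ) - r
    · rw [if_pos h, if_pos (hcond.mpr h), Int.cast_natCast]
    · rw [if_neg h, if_neg (fun hc => h (hcond.mp hc)), Int.cast_zero]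
  rw [hs a, hs abar]
  have hf1 : ((p ^ f : ℕ) : ZMod d) = 1 := by
    have := (ZMod.natCast_eq_natCast_iff _ _ _).mpr hf_ord
    simpa using this
  rw [glaisher_pow_eq p d f a abar hf1 habar_pos (habar_min a ha rfl) habar_cong]
end

section
/- If q is a power of a prime p and p^k divides a with k >= 0 and a a positive integer, then 1 + (q-1) * (sum over integers b with 0 <= b*(q-1) < a of binomial(a, b*(q-1))) is congruent to 0 modulo p^(k+1). -/
/-!
Let `t : 𝔽_q → W(𝔽_q)` be the Teichmüller lift into the Witt vectors. Since `t x + 1` and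
`t (x + 1)` agree modulo `p`, their `a`-th powers agree modulo `p ^ (k + 1)` when `p ^ k ∣ a`.
Summing over `x ∈ 𝔽_q`, the second sum is `∑ x, t x ^ a`, and by the binomial theorem the
difference of the two sums is `∑_{j < a} (a choose j) ∑ x, t x ^ j`. The power sums of the
multiplicative character `t` are `q - 1` or `0` according as `q - 1` divides `j` or not (plus `1`
for `j = 0`), so the difference is the integer `1 + (q - 1) ∑_{q - 1 ∣ j < a} (a choose j)`, and
`p ^ (k + 1) W(𝔽_q) ∩ ℤ = p ^ (k + 1) ℤ`.
-/

open Finset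

theorem add_one_pow_sub_pow {R : Type*} [CommRing R] (y : R) (a : ℕ) :
    (y + 1) ^ a - y ^ a = ∑ j ∈ range a, y ^ j * (a.choose j : R) := by
  rw [add_pow, sum_range_succ, Nat.choose_self]
  simp only [one_pow, mul_one, Nat.cast_one, add_sub_cancel_right]

theorem sum_range_ite_mul_lt_eq_sum_filter_dvd {M : Type*} [AddCommMonoid M] {m : ℕ}
    (hm : m ≠ 0) (a : ℕ) (f : ℕ → M) :
    ∑ b ∈ range a, (if b * m < a then f (b * m) else 0) = ∑ j ∈ range a with m ∣ j, f j := by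
  rw [← sum_filter]
  refine sum_nbij' (· * m) (· / m) ?_ ?_ (fun b _ => Nat.mul_div_cancel b (Nat.pos_of_ne_zero hm))
    (fun j hj => Nat.div_mul_cancel (mem_filter.mp hj).2) (fun _ _ => rfl)
  · intro b hb
    simp only [mem_filter, mem_range] at hb ⊢
    exact ⟨hb.2, dvd_mul_left m b⟩
  · intro j hj
    simp only [mem_filter, mem_range] at hj ⊢
    rw [Nat.div_mul_cancel hj.2]
    exact ⟨(Nat.div_le_self j m).trans_lt hj.1, hj.1⟩

theorem Fintype.sum_eq_add_sum_units {G₀ M : Type*} [GroupWithZero G₀] [Fintype G₀]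
    [DecidableEq G₀] [AddCommMonoid M] (f : G₀ → M) : ∑ x, f x = f 0 + ∑ u : G₀ˣ, f u := by
  rw [Fintype.sum_eq_add_sum_compl 0, Finset.sum_subtype _ (p := (· ≠ 0)) (by simp),
    ← (unitsEquivNeZero (G₀ := G₀)).sum_comp]
  rfl

namespace WittVector

variable {p : ℕ} [Fact p.Prime] {k : Type*} [CommRing k]

local notation "𝕎" => WittVector p

theorem teichmuller_injective : Function.Injective (teichmuller p : k →* 𝕎 k) := fun x y h => by
  simpa only [teichmuller_coeff_zero] using congrArg (coeff · 0) h

variable [CharP k p] [PerfectRing k p]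

theorem p_dvd_iff_constantCoeff_eq_zero {x : 𝕎 k} : (p : 𝕎 k) ∣ x ↔ constantCoeff x = 0 := by
  rw [← Ideal.mem_span_singleton, ← ker_constantCoeff, RingHom.mem_ker]

theorem p_pow_dvd_intCast_iff {j : ℕ} {n : ℤ} : (p : 𝕎 k) ^ j ∣ (n : 𝕎 k) ↔ (p : ℤ) ^ j ∣ n := by
  refine ⟨fun h => ?_, fun h => by exact_mod_cast map_dvd (Int.castRingHom (𝕎 k)) h⟩
  induction j generalizing n with
  | zero => exact one_dvd n
  | succ j ih =>
    have hpn : (p : ℤ) ∣ n := by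
      rw [← CharP.intCast_eq_zero_iff k p, ← map_intCast (constantCoeff (p := p) (R := k)),
        ← p_dvd_iff_constantCoeff_eq_zero]
      exact (dvd_pow_self _ j.succ_ne_zero).trans h
    obtain ⟨m, rfl⟩ := hpn
    obtain ⟨c, hc⟩ := h
    have hm : (m : 𝕎 k) = (p : 𝕎 k) ^ j * c := by
      refine sub_eq_zero.mp (eq_zero_of_p_mul_eq_zero _ ?_)
      push_cast at hc
      rw [sub_mul, mul_comm, hc]
      ring
    rw [pow_succ']
    exact mul_dvd_mul_left _ (ih ⟨c, hm⟩)

theorem p_dvd_teichmuller_add_one_sub (x : k) :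
    (p : 𝕎 k) ∣ teichmuller p x + 1 - teichmuller p (x + 1) := by
  rw [p_dvd_iff_constantCoeff_eq_zero, map_sub, map_add, map_one, constantCoeff_apply,
    constantCoeff_apply, teichmuller_coeff_zero, teichmuller_coeff_zero, sub_self]

theorem p_pow_succ_dvd_teichmuller_add_one_pow_sub {n a : ℕ} (h : p ^ n ∣ a) (x : k) :
    (p : 𝕎 k) ^ (n + 1) ∣ (teichmuller p x + 1) ^ a - teichmuller p (x + 1) ^ a := by
  obtain ⟨c, rfl⟩ := h
  rw [pow_mul, pow_mul]
  exact (dvd_sub_pow_of_dvd_sub (p_dvd_teichmuller_add_one_sub x) n).trans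
    (sub_dvd_pow_sub_pow _ _ c)

end WittVector

namespace FiniteField

variable {K R : Type*} [Field K] [Fintype K] [CommRing R] [IsDomain R]

local notation "q" => Fintype.card K

theorem sum_units_pow_of_injective [DecidableEq K] {χ : K →* R} (hχ : Function.Injective χ)
    (i : ℕ) :
    ∑ u : Kˣ, χ u ^ i = if q - 1 ∣ i then ((q - 1 : ℕ) : R) else 0 := by
  let φ : Kˣ →* R := (powMonoidHom i).comp (χ.comp (Units.coeHom K))
  classical
  have hφ : φ = 1 ↔ q - 1 ∣ i := by
    rw [← forall_pow_eq_one_iff, DFunLike.ext_iff]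
    refine forall_congr' fun u => ?_
    simp [φ, ← map_pow, Units.ext_iff, hχ.eq_iff' (map_one χ)]
  refine (sum_hom_units φ).trans ?_
  simp only [hφ, Fintype.card_units, Nat.cast_ite, Nat.cast_zero]

theorem sum_pow_of_injective {χ : K →* R} (hχ : Function.Injective χ) (hχ0 : χ 0 = 0) (i : ℕ) :
    ∑ x : K, χ x ^ i = 0 ^ i + if q - 1 ∣ i then ((q - 1 : ℕ) : R) else 0 := by
  classical
  rw [Fintype.sum_eq_add_sum_units, hχ0, sum_units_pow_of_injective hχ]

theorem sum_add_one_pow_sub_sum_pow_of_injective {χ : K →* R} (hχ : Function.Injective χ)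
    (hχ0 : χ 0 = 0) {a : ℕ} (ha : a ≠ 0) :
    ∑ x : K, (χ x + 1) ^ a - ∑ x : K, χ x ^ a
      = 1 + ((q - 1 : ℕ) : R) * ∑ j ∈ range a with q - 1 ∣ j, (a.choose j : R) := by
  calc ∑ x : K, (χ x + 1) ^ a - ∑ x : K, χ x ^ a
      = ∑ j ∈ range a, (∑ x : K, χ x ^ j) * (a.choose j : R) := by
        simp only [← sum_sub_distrib, add_one_pow_sub_pow, sum_mul]
        exact sum_comm
    _ = ∑ j ∈ range a, (0 : R) ^ j * (a.choose j : R)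
          + ((q - 1 : ℕ) : R) * ∑ j ∈ range a with q - 1 ∣ j, (a.choose j : R) := by
        simp only [sum_pow_of_injective hχ hχ0, add_mul, sum_add_distrib, sum_filter, mul_sum,
          ite_mul, zero_mul, mul_ite, mul_zero]
    _ = 1 + ((q - 1 : ℕ) : R) * ∑ j ∈ range a with q - 1 ∣ j, (a.choose j : R) := by
        rw [← add_one_pow_sub_pow, zero_add, one_pow, zero_pow ha, sub_zero]

theorem carlitz_congruence (p : ℕ) [Fact p.Prime] [CharP K p] {n a : ℕ} (ha : a ≠ 0)
    (hna : p ^ n ∣ a) :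
    (p : ℤ) ^ (n + 1) ∣ 1 + ((q : ℤ) - 1) * ∑ j ∈ range a with q - 1 ∣ j, (a.choose j : ℤ) := by
  have hdiff := sum_add_one_pow_sub_sum_pow_of_injective (R := WittVector p K)
    WittVector.teichmuller_injective (WittVector.teichmuller_zero p) ha
  have hshift : ∑ x : K, WittVector.teichmuller p x ^ a
      = ∑ x : K, WittVector.teichmuller p (x + 1) ^ a :=
    (Equiv.sum_comp (Equiv.addRight (1 : K)) _).symm
  rw [← WittVector.p_pow_dvd_intCast_iff (k := K)]
  push_cast
  rw [← Nat.cast_pred Fintype.card_pos, ← hdiff, hshift, ← sum_sub_distrib]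
  exact dvd_sum fun x _ => WittVector.p_pow_succ_dvd_teichmuller_add_one_pow_sub hna x

end FiniteField

/-- Generalized Carlitz congruence: if `q` is a power of the prime `p` and `p^k ∣ a` then
`1 + (q-1) * ∑_{0 ≤ b(q-1) < a} binomial(a, b(q-1)) ≡ 0 (mod p^(k+1))`. -/
theorem carlitz_general (p f q k a : ℕ) (hp : p.Prime) (hf : 0 < f) (hq : q = p ^ f)
    (ha : 0 < a) (hka : p ^ k ∣ a) :
    (1 + ((q : ℤ) - 1) * ∑ b ∈ Finset.range a,
        if b * (q - 1) < a then (a.choose (b * (q - 1)) : ℤ) else 0)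
      ≡ 0 [ZMOD (p : ℤ) ^ (k + 1)] := by
  have : Fact p.Prime := ⟨hp⟩
  let K := GaloisField p f
  have : Fintype K := Fintype.ofFinite K
  have hcard : Fintype.card K = q := by
    rw [← Nat.card_eq_fintype_card, GaloisField.card p f hf.ne', hq]
  have hq1 : q - 1 ≠ 0 := by
    rw [← hcard]
    exact Nat.sub_ne_zero_of_lt Fintype.one_lt_card
  rw [Int.modEq_zero_iff_dvd,
    sum_range_ite_mul_lt_eq_sum_filter_dvd hq1 a (fun j => (a.choose j : ℤ)), ← hcard]
  exact FiniteField.carlitz_congruence p ha.ne' hka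
end

section
/- If p is an odd prime, k >= 0, and p^k divides the positive integer a, then p + (p-1) * (sum over integers b with 0 < b*(p-1) < a of binomial(a, b*(p-1))) is congruent to 0 modulo p^(k+1). -/
open Finset

section CarlitzAux

variable {p k : ℕ}

private lemma carlitz_cop (hp : p.Prime) : Nat.Coprime (p ^ k) (p - 1) := by
  apply Nat.Coprime.pow_left
  obtain ⟨m, rfl⟩ := Nat.exists_eq_succ_of_ne_zero hp.pos.ne'
  simp [Nat.Coprime]

private lemma carlitz_isUnit (hp : p.Prime) (x : ZMod (p ^ (k + 1)))
    (hx : ZMod.castHom (dvd_pow_self p (Nat.succ_ne_zero k)) (ZMod p) x ≠ 0) :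
    IsUnit x := by
  haveI : NeZero (p ^ (k + 1)) := ⟨pow_ne_zero _ hp.pos.ne'⟩
  have hxv : ((x.val : ℕ) : ZMod (p ^ (k + 1))) = x := ZMod.natCast_rightInverse x
  rw [← hxv] at hx ⊢
  rw [map_natCast] at hx
  have hd : ¬ p ∣ x.val := fun hdvd => hx ((ZMod.natCast_eq_zero_iff _ _).mpr hdvd)
  rw [ZMod.isUnit_iff_coprime]
  exact Nat.Coprime.pow_right _ ((Nat.Prime.coprime_iff_not_dvd hp).mpr hd).symm

private lemma carlitz_pow_eq_one (hp : p.Prime) (x : ZMod (p ^ (k + 1)))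
    (hx : ZMod.castHom (dvd_pow_self p (Nat.succ_ne_zero k)) (ZMod p) x = 1) :
    x ^ p ^ k = 1 := by
  haveI : NeZero (p ^ (k + 1)) := ⟨pow_ne_zero _ hp.pos.ne'⟩
  have hxv : ((x.val : ℕ) : ZMod (p ^ (k + 1))) = x := ZMod.natCast_rightInverse x
  rw [← hxv] at hx ⊢
  rw [map_natCast] at hx
  have h2 : (p : ℤ) ∣ (x.val : ℤ) - 1 := by
    have h0 : (((x.val : ℤ) - 1 : ℤ) : ZMod p) = 0 := by push_cast [hx]; ring
    exact_mod_cast (ZMod.intCast_zmod_eq_zero_iff_dvd _ _).mp h0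
  have h3 : ((p : ℤ) ^ (k + 1)) ∣ ((x.val : ℤ)) ^ p ^ k - 1 ^ p ^ k := by
    have := dvd_sub_pow_of_dvd_sub (R := ℤ) (p := p) (a := (x.val : ℤ)) (b := 1) h2 k
    simpa using this
  have h4 : ((((x.val : ℤ)) ^ p ^ k - 1 : ℤ) : ZMod (p ^ (k + 1))) = 0 := by
    rw [ZMod.intCast_zmod_eq_zero_iff_dvd]
    simpa using h3
  push_cast at h4
  linear_combination h4

private lemma carlitz_root_eq (hp : p.Prime) (x y : ZMod (p ^ (k + 1)))
    (hx : x ^ (p - 1) = 1) (hy : y ^ (p - 1) = 1)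
    (hxy : ZMod.castHom (dvd_pow_self p (Nat.succ_ne_zero k)) (ZMod p) x
      = ZMod.castHom (dvd_pow_self p (Nat.succ_ne_zero k)) (ZMod p) y) :
    x = y := by
  set π := ZMod.castHom (dvd_pow_self p (Nat.succ_ne_zero k)) (ZMod p) with hπ
  have h21 : p - 2 + 1 = p - 1 := by have := hp.two_le; omega
  have hyy : y ^ (p - 2) * y = 1 := by rw [← pow_succ, h21, hy]
  set w := x * y ^ (p - 2) with hw
  have hw1 : w ^ (p - 1) = 1 := by
    rw [hw, mul_pow, hx, one_mul, ← pow_mul, mul_comm, pow_mul, hy, one_pow]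
  have hwm : π w = 1 := by
    rw [hw, map_mul, map_pow, hxy, ← map_pow, ← map_mul, mul_comm, hyy, map_one]
  have hw2 : w ^ p ^ k = 1 := carlitz_pow_eq_one hp w hwm
  have hd : orderOf w ∣ Nat.gcd (p ^ k) (p - 1) :=
    Nat.dvd_gcd (orderOf_dvd_of_pow_eq_one hw2) (orderOf_dvd_of_pow_eq_one hw1)
  rw [carlitz_cop hp] at hd
  have hw3 : w = 1 := orderOf_eq_one_iff.mp (Nat.dvd_one.mp hd)
  calc x = x * (y ^ (p - 2) * y) := by rw [hyy, mul_one]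
    _ = w * y := by rw [hw, mul_assoc]
    _ = y := by rw [hw3, one_mul]

private lemma carlitz_geom {R : Type*} [CommRing R] {n : ℕ} (z : R)
    (h1 : z ^ n = 1) (hz : IsUnit (z - 1)) : ∑ i ∈ range n, z ^ i = 0 := by
  have h := geom_sum_mul z n
  rw [h1, sub_self] at h
  obtain ⟨u, hu⟩ := hz
  rw [← hu] at h
  exact (Units.mul_left_eq_zero u).mp h

end CarlitzAux

set_option maxHeartbeats 2000000

/-- Carlitz's original congruence (1953): for `p` an odd prime with `p^k ∣ a`, `a > 0`,
`p + (p-1) * ∑_{0 < b(p-1) < a} binomial(a, b(p-1)) ≡ 0 (mod p^(k+1))`. -/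
theorem carlitz (p k a : ℕ) (hp : p.Prime) (hodd : Odd p)
    (ha : 0 < a) (hka : p ^ k ∣ a) :
    ((p : ℤ) + ((p : ℤ) - 1) * ∑ b ∈ Finset.Ico 1 a,
        if b * (p - 1) < a then (a.choose (b * (p - 1)) : ℤ) else 0)
      ≡ 0 [ZMOD (p : ℤ) ^ (k + 1)] := by
  haveI : Fact p.Prime := ⟨hp⟩
  haveI : NeZero (p ^ (k + 1)) := ⟨pow_ne_zero _ hp.pos.ne'⟩
  have hp2 : p ≠ 2 := by rintro rfl; simp [Nat.odd_iff] at hodd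
  have hp3 : 3 ≤ p := by have := hp.two_le; omega
  rw [Int.modEq_zero_iff_dvd]
  have key0 : (((p : ℤ) + ((p : ℤ) - 1) * ∑ b ∈ Finset.Ico 1 a,
        if b * (p - 1) < a then (a.choose (b * (p - 1)) : ℤ) else 0 : ℤ)
          : ZMod (p ^ (k + 1))) = 0 := by
    push_cast
    set S : ZMod (p ^ (k + 1)) := ∑ x ∈ Finset.Ico 1 a,
        if x * (p - 1) < a then ((a.choose (x * (p - 1)) : ℕ) : ZMod (p ^ (k + 1))) else 0 with hS
    show (p : ZMod (p ^ (k + 1))) + ((p : ZMod (p ^ (k + 1))) - 1) * S = 0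
    -- setup
    set π := ZMod.castHom (dvd_pow_self p (Nat.succ_ne_zero k)) (ZMod p) with hπdef
    obtain ⟨g, hg⟩ := IsCyclic.exists_generator (α := (ZMod p)ˣ)
    have hcard : Fintype.card (ZMod p)ˣ = p - 1 := by
      rw [ZMod.card_units_eq_totient, Nat.totient_prime hp]
    have hcop : Nat.Coprime (p ^ k) (p - 1) := carlitz_cop hp
    have hp1pos : 0 < p - 1 := by omega
    obtain ⟨h, hh⟩ : ∃ h : (ZMod p)ˣ, h = g ^ p ^ k := ⟨_, rfl⟩
    have hhord : orderOf h = p - 1 := by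
      rw [hh, orderOf_pow, orderOf_eq_card_of_forall_mem_zpowers hg, Nat.card_eq_fintype_card,
        hcard, Nat.Coprime.gcd_eq_one hcop.symm, Nat.div_one]
    have hdlog : ∀ x : ZMod p, x ≠ 0 → ∃ j, j < p - 1 ∧ ((h : ZMod p)) ^ j = x := by
      intro x hx
      have hmem : Units.mk0 x hx ∈ Subgroup.zpowers h := by
        have htop : Subgroup.zpowers h = ⊤ := by
          apply Subgroup.eq_top_of_card_eq
          rw [Nat.card_zpowers, hhord, Nat.card_eq_fintype_card, hcard]
        rw [htop]; trivial
      rw [← mem_powers_iff_mem_zpowers] at hmem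
      obtain ⟨n, hn⟩ := hmem
      have hn' : h ^ n = Units.mk0 x hx := hn
      refine ⟨n % (p - 1), Nat.mod_lt _ hp1pos, ?_⟩
      have : h ^ (n % (p - 1)) = Units.mk0 x hx := by
        rw [← hhord, pow_mod_orderOf, hn']
      calc ((h : ZMod p)) ^ (n % (p - 1)) = ((h ^ (n % (p - 1)) : (ZMod p)ˣ) : ZMod p) := by
            rw [Units.val_pow_eq_pow_val]
        _ = x := by rw [this, Units.val_mk0]
    have hhpow_ne : ∀ j, ¬ (p - 1) ∣ j → ((h : ZMod p)) ^ j ≠ 1 := by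
      intro j hj heq
      apply hj
      have hu : h ^ j = 1 := Units.ext (by simpa [Units.val_pow_eq_pow_val] using heq)
      exact hhord ▸ orderOf_dvd_of_pow_eq_one hu
    have hhne0 : ∀ j, ((h : ZMod p)) ^ j ≠ 0 := by
      intro j
      rw [← Units.val_pow_eq_pow_val]
      exact Units.ne_zero _
    have h2ne : (2 : ZMod p) ≠ 0 := by
      intro h0
      have hd : p ∣ 2 := by
        have : ((2 : ℕ) : ZMod p) = 0 := by exact_mod_cast h0
        exact (ZMod.natCast_eq_zero_iff 2 p).mp this
      exact hp2 ((Nat.prime_dvd_prime_iff_eq hp Nat.prime_two).mp hd)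
    -- ζ
    obtain ⟨c, hcdef⟩ : ∃ c : ℕ, c = (g : ZMod p).val := ⟨_, rfl⟩
    have hc : ((c : ℕ) : ZMod p) = (g : ZMod p) := by
      rw [hcdef]; exact ZMod.natCast_rightInverse _
    obtain ⟨ζ, hζdef⟩ : ∃ ζ : ZMod (p ^ (k + 1)), ζ = (c : ZMod (p ^ (k + 1))) ^ p ^ k := ⟨_, rfl⟩
    have hπc : π (c : ZMod (p ^ (k + 1))) = (g : ZMod p) := by rw [hπdef, map_natCast, hc]
    have hπζ : ∀ j, π (ζ ^ j) = ((h : ZMod p)) ^ j := by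
      intro j
      rw [map_pow, hζdef, map_pow, hπc, hh]
      simp [Units.val_pow_eq_pow_val, ← pow_mul]
    have htot : Nat.totient (p ^ (k + 1)) = p ^ k * (p - 1) := by
      rw [Nat.totient_prime_pow hp (Nat.succ_pos k)]; simp
    have hEuler : ∀ u : (ZMod (p ^ (k + 1)))ˣ,
        ((u : ZMod (p ^ (k + 1)))) ^ (p ^ k * (p - 1)) = 1 := by
      intro u
      rw [← htot, ← Units.val_pow_eq_pow_val, ZMod.pow_totient, Units.val_one]
    have hcu : IsUnit (c : ZMod (p ^ (k + 1))) :=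
      carlitz_isUnit hp _ (by rw [hπc]; exact Units.ne_zero g)
    have hζ1 : ζ ^ (p - 1) = 1 := by
      obtain ⟨u, hu⟩ := hcu
      rw [hζdef, ← pow_mul, ← hu]
      exact hEuler u
    have hone : ∀ j, (p - 1) ∣ j → ζ ^ j = 1 := by
      rintro j ⟨t, rfl⟩; rw [pow_mul, hζ1, one_pow]
    have hζunit : ∀ j, ¬ (p - 1) ∣ j → IsUnit (ζ ^ j - 1) := by
      intro j hj
      apply carlitz_isUnit hp
      rw [map_sub, hπζ, map_one]
      intro h0
      exact hhpow_ne j hj (by linear_combination h0)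
    have hgeo : ∀ j, ∑ i ∈ range (p - 1), (ζ ^ j) ^ i
        = if (p - 1) ∣ j then ((p - 1 : ℕ) : ZMod (p ^ (k + 1))) else 0 := by
      intro j
      split_ifs with hd
      · rw [hone j hd]
        simp [card_range]
      · exact carlitz_geom _ (by rw [pow_right_comm, hζ1, one_pow]) (hζunit j hd)
    -- the special index t with ζ^t = -1
    obtain ⟨t, ht⟩ := hodd
    have ht2 : t * 2 = p - 1 := by omega
    have htpos : 0 < t := by omega
    have htlt : t < p - 1 := by omega
    have hζt : ζ ^ t = -1 := by
      have hsq : (ζ ^ t) ^ 2 = 1 := by rw [← pow_mul, ht2, hζ1]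
      have hfac : (ζ ^ t - 1) * (ζ ^ t + 1) = 0 := by linear_combination hsq
      have hπt : π (ζ ^ t) = -1 := by
        have hx2 : (((h : ZMod p)) ^ t) * (((h : ZMod p)) ^ t) = 1 := by
          rw [← pow_add]
          have : t + t = p - 1 := by omega
          rw [this, ← Units.val_pow_eq_pow_val, ← hhord, pow_orderOf_eq_one, Units.val_one]
        have hx1 : ((h : ZMod p)) ^ t ≠ 1 :=
          hhpow_ne t (fun hd => by have := Nat.le_of_dvd htpos hd; omega)
        rcases mul_self_eq_one_iff.mp hx2 with h1 | h1
        · exact absurd h1 hx1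
        · rw [hπζ]; exact h1
      have hu : IsUnit (ζ ^ t - 1) := by
        apply carlitz_isUnit hp
        rw [map_sub, map_one, hπt]
        intro h0
        exact h2ne (by linear_combination -h0)
      obtain ⟨u, hu'⟩ := hu
      rw [← hu'] at hfac
      have := (Units.mul_right_eq_zero u).mp hfac
      linear_combination this
    have hht : ((h : ZMod p)) ^ t = -1 := by
      have := hπζ t
      rw [hζt] at this
      rw [← this, map_neg, map_one]
    have h1add : ∀ i, i < p - 1 → i ≠ t → (1 + ((h : ZMod p)) ^ i) ≠ 0 := by
      intro i hi hit h0
      have hneg : ((h : ZMod p)) ^ i = -1 := by linear_combination h0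
      have hsq : ((h : ZMod p)) ^ (i * 2) = 1 := by
        rw [pow_mul, hneg]; norm_num
      have hdvd : (p - 1) ∣ i * 2 := by
        have hu : h ^ (i * 2) = 1 := Units.ext (by simpa [Units.val_pow_eq_pow_val] using hsq)
        exact hhord ▸ orderOf_dvd_of_pow_eq_one hu
      obtain ⟨s, hs⟩ := hdvd
      have hslt : s < 2 := by nlinarith [hp3]
      interval_cases s
      · have : i = 0 := by omega
        subst this
        rw [pow_zero] at hneg
        exact h2ne (by linear_combination hneg)
      · exact hit (by omega)
    -- key dlog correspondence
    have key : ∀ i, i < p - 1 → i ≠ t → ∃ j, j < p - 1 ∧ j ≠ 0 ∧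
        (1 + ζ ^ i) ^ p ^ k = ζ ^ j ∧ ((h : ZMod p)) ^ j = 1 + ((h : ZMod p)) ^ i := by
      intro i hi hit
      obtain ⟨j, hj, hjh⟩ := hdlog _ (h1add i hi hit)
      refine ⟨j, hj, ?_, ?_, hjh⟩
      · rintro rfl
        rw [pow_zero] at hjh
        exact hhne0 i (by linear_combination -hjh)
      · apply carlitz_root_eq hp
        · have hu1 : IsUnit (1 + ζ ^ i) := by
            apply carlitz_isUnit hp
            rw [map_add, map_one, hπζ]
            exact h1add i hi hit
          obtain ⟨u, hu⟩ := hu1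
          rw [← hu, ← pow_mul]
          exact hEuler u
        · rw [pow_right_comm, hζ1, one_pow]
        · rw [map_pow, map_add, map_one, hπζ, hπζ, ← hjh]
          exact ZMod.pow_card_pow _
    have hinj : ∀ x y, x < p - 1 → y < p - 1 →
        ((h : ZMod p)) ^ x = ((h : ZMod p)) ^ y → x = y := by
      intro x y hx hy hxy
      have huxy : h ^ x = h ^ y := Units.ext (by simpa [Units.val_pow_eq_pow_val] using hxy)
      exact pow_injOn_Iio_orderOf (by rw [hhord]; exact hx) (by rw [hhord]; exact hy) huxy
    -- m
    obtain ⟨m, hm⟩ := hka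
    have hmdvd : (p - 1) ∣ a ↔ (p - 1) ∣ m := by
      constructor
      · intro hd
        rw [hm] at hd
        exact Nat.Coprime.dvd_of_dvd_mul_left hcop.symm hd
      · intro hd
        rw [hm]
        exact hd.mul_left _
    -- filter side
    have hT1 : ∑ i ∈ range (p - 1), (1 + ζ ^ i) ^ a
        = ((p - 1 : ℕ) : ZMod (p ^ (k + 1)))
          * ∑ j ∈ range (a + 1), (if (p - 1) ∣ j then ((a.choose j : ℕ) : ZMod (p ^ (k + 1))) else 0) := by
      calc ∑ i ∈ range (p - 1), (1 + ζ ^ i) ^ a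
          = ∑ i ∈ range (p - 1), ∑ j ∈ range (a + 1),
              ((a.choose j : ℕ) : ZMod (p ^ (k + 1))) * (ζ ^ j) ^ i := by
            refine sum_congr rfl fun i _ => ?_
            rw [add_comm 1 (ζ ^ i), add_pow]
            refine sum_congr rfl fun j _ => ?_
            rw [one_pow, mul_one, pow_right_comm]
            ring
        _ = ∑ j ∈ range (a + 1), ((a.choose j : ℕ) : ZMod (p ^ (k + 1)))
              * ∑ i ∈ range (p - 1), (ζ ^ j) ^ i := by
            rw [sum_comm]
            exact sum_congr rfl fun j _ => by rw [mul_sum]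
        _ = ∑ j ∈ range (a + 1), ((a.choose j : ℕ) : ZMod (p ^ (k + 1)))
              * (if (p - 1) ∣ j then ((p - 1 : ℕ) : ZMod (p ^ (k + 1))) else 0) := by
            exact sum_congr rfl fun j _ => by rw [hgeo j]
        _ = ((p - 1 : ℕ) : ZMod (p ^ (k + 1)))
              * ∑ j ∈ range (a + 1), (if (p - 1) ∣ j then ((a.choose j : ℕ) : ZMod (p ^ (k + 1))) else 0) := by
            rw [mul_sum]
            refine sum_congr rfl fun j _ => ?_
            split_ifs <;> ring
    -- split filter sum
    have hmid : ∑ j ∈ Ico 1 a, (if (p - 1) ∣ j then ((a.choose j : ℕ) : ZMod (p ^ (k + 1))) else 0) = S := by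
      rw [hS, ← sum_filter, ← sum_filter]
      refine sum_nbij' (fun j => j / (p - 1)) (fun b => b * (p - 1)) ?_ ?_ ?_ ?_ ?_
      · intro j hj
        simp only [mem_filter, mem_Ico] at hj ⊢
        obtain ⟨⟨hj1, hj2⟩, hjd⟩ := hj
        have hle : p - 1 ≤ j := Nat.le_of_dvd (by omega) hjd
        refine ⟨⟨?_, ?_⟩, ?_⟩
        · exact (Nat.one_le_div_iff hp1pos).mpr hle
        · exact lt_of_le_of_lt (Nat.div_le_self _ _) hj2
        · rw [Nat.div_mul_cancel hjd]; exact hj2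
      · intro b hb
        simp only [mem_filter, mem_Ico] at hb ⊢
        obtain ⟨⟨hb1, hb2⟩, hbd⟩ := hb
        exact ⟨⟨by nlinarith, hbd⟩, dvd_mul_left _ _⟩
      · intro j hj
        simp only [mem_filter, mem_Ico] at hj
        exact Nat.div_mul_cancel hj.2
      · intro b hb
        exact Nat.mul_div_cancel b hp1pos
      · intro j hj
        simp only [mem_filter, mem_Ico] at hj
        rw [Nat.div_mul_cancel hj.2]
    have hsplit : ∑ j ∈ range (a + 1), (if (p - 1) ∣ j then ((a.choose j : ℕ) : ZMod (p ^ (k + 1))) else 0)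
        = 1 + S + (if (p - 1) ∣ a then (1 : ZMod (p ^ (k + 1))) else 0) := by
      have hr : range (a + 1) = insert a (insert 0 (Ico 1 a)) := by
        rw [range_add_one, range_eq_Ico, ← Finset.insert_Ico_add_one_left_eq_Ico ha, Nat.zero_add]
      rw [hr, sum_insert, sum_insert]
      · rw [hmid]
        simp only [Nat.choose_zero_right, Nat.choose_self, dvd_zero, if_true, Nat.cast_one]
        split_ifs <;> ring
      · simp
      · simp only [mem_insert, mem_Ico, not_or]
        omega
    -- eval side
    have h0mem : (0 : ℕ) ∈ range (p - 1) := mem_range.mpr hp1pos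
    have htmem : t ∈ range (p - 1) := mem_range.mpr htlt
    have key' : ∀ i ∈ (range (p - 1)).erase t, ∃ j, j < p - 1 ∧ j ≠ 0 ∧
        (1 + ζ ^ i) ^ p ^ k = ζ ^ j ∧ ((h : ZMod p)) ^ j = 1 + ((h : ZMod p)) ^ i := by
      intro i hi
      rw [mem_erase, mem_range] at hi
      exact key i hi.2 hi.1
    have key2 : ∀ j ∈ (range (p - 1)).erase 0, ∃ i, i < p - 1 ∧ i ≠ t ∧
        ((h : ZMod p)) ^ i = ((h : ZMod p)) ^ j - 1 := by
      intro j hj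
      rw [mem_erase, mem_range] at hj
      have hne : ((h : ZMod p)) ^ j - 1 ≠ 0 := by
        intro h0
        refine hhpow_ne j ?_ (by linear_combination h0)
        intro hd
        have := Nat.le_of_dvd (Nat.pos_of_ne_zero hj.1) hd
        omega
      obtain ⟨i, hi, hih⟩ := hdlog _ hne
      refine ⟨i, hi, ?_, hih⟩
      rintro rfl
      rw [hht] at hih
      exact hhne0 j (by linear_combination -hih)
    have hT2 : ∑ i ∈ range (p - 1), (1 + ζ ^ i) ^ a
        = (if (p - 1) ∣ a then ((p - 1 : ℕ) : ZMod (p ^ (k + 1))) else 0) - 1 := by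
      rw [← Finset.add_sum_erase _ _ htmem, hζt]
      have hz : (1 + (-1 : ZMod (p ^ (k + 1)))) ^ a = 0 := by
        rw [add_neg_cancel]
        exact zero_pow ha.ne'
      rw [hz, zero_add]
      have hstep : ∑ i ∈ (range (p - 1)).erase t, (1 + ζ ^ i) ^ a
          = ∑ j ∈ (range (p - 1)).erase 0, (ζ ^ m) ^ j := by
        refine sum_bij' (fun i hi => (key' i hi).choose) (fun j hj => (key2 j hj).choose)
          ?_ ?_ ?_ ?_ ?_
        · intro i hi
          obtain ⟨hj1, hj2, _, _⟩ := (key' i hi).choose_spec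
          rw [mem_erase, mem_range]
          exact ⟨hj2, hj1⟩
        · intro j hj
          obtain ⟨hi1, hi2, _⟩ := (key2 j hj).choose_spec
          rw [mem_erase, mem_range]
          exact ⟨hi2, hi1⟩
        · intro i hi
          obtain ⟨hj1, hj2, _, hjh⟩ := (key' i hi).choose_spec
          obtain ⟨hi1, hi2, hih⟩ := (key2 _ (by rw [mem_erase, mem_range]; exact ⟨hj2, hj1⟩)).choose_spec
          rw [mem_erase, mem_range] at hi
          apply hinj _ _ hi1 hi.2
          rw [hih, hjh]
          ring
        · intro j hj
          obtain ⟨hi1, hi2, hih⟩ := (key2 j hj).choose_spec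
          obtain ⟨hj1, hj2, _, hjh⟩ := (key' _ (by rw [mem_erase, mem_range]; exact ⟨hi2, hi1⟩)).choose_spec
          rw [mem_erase, mem_range] at hj
          apply hinj _ _ hj1 hj.2
          rw [hjh, hih]
          ring
        · intro i hi
          obtain ⟨hj1, hj2, hjζ, _⟩ := (key' i hi).choose_spec
          rw [hm, pow_mul]
          exact (congrArg (· ^ m) hjζ).trans (pow_right_comm _ _ _)
      rw [hstep]
      have hsum := Finset.add_sum_erase (range (p - 1)) (fun j => (ζ ^ m) ^ j) h0mem
      simp only [pow_zero] at hsum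
      have hgm := hgeo m
      by_cases hda : (p - 1) ∣ a
      · rw [if_pos hda]
        rw [if_pos (hmdvd.mp hda)] at hgm
        linear_combination hsum + hgm
      · rw [if_neg hda]
        rw [if_neg (fun hdm => hda (hmdvd.mpr hdm))] at hgm
        linear_combination hsum + hgm
    -- combine
    have hfin : ((p - 1 : ℕ) : ZMod (p ^ (k + 1)))
        * (1 + S + (if (p - 1) ∣ a then (1 : ZMod (p ^ (k + 1))) else 0))
        = (if (p - 1) ∣ a then ((p - 1 : ℕ) : ZMod (p ^ (k + 1))) else 0) - 1 := by
      rw [← hsplit, ← hT1, hT2]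
    have he : (if (p - 1) ∣ a then ((p - 1 : ℕ) : ZMod (p ^ (k + 1))) else 0)
        = ((p - 1 : ℕ) : ZMod (p ^ (k + 1))) * (if (p - 1) ∣ a then (1 : ZMod (p ^ (k + 1))) else 0) := by
      split_ifs <;> ring
    rw [he] at hfin
    have hq : ((p - 1 : ℕ) : ZMod (p ^ (k + 1))) = (p : ZMod (p ^ (k + 1))) - 1 := by
      have h1 : 1 ≤ p := hp.one_le
      push_cast [h1]
      ring
    rw [hq] at hfin
    linear_combination hfin
  have h2 := (ZMod.intCast_zmod_eq_zero_iff_dvd _ (p ^ (k + 1))).mp key0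
  exact_mod_cast h2
end

section
/- Let p be a prime, q = p^f, let h >= k >= 0 be integers with f dividing h+k, and let r, s be positive integers. Then (-1)^(p*s) * (sum over integers b of binomial(s*p^k, b*(q-1)-r)) is congruent to (-1)^(p*r) * (sum over integers b of binomial(r*p^h, b*(q-1)-s)) modulo p^(k+1). -/
open Polynomial Finset

/-! ### Generic ring helper lemmas -/

lemma carl_one_add_pow {A : Type} [CommRing A] (c : A) (n : ℕ) :
    ∃ d, (1 + c) ^ n = 1 + n * c + c ^ 2 * d := by
  induction n with
  | zero => exact ⟨0, by simp⟩
  | succ n ih =>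
    obtain ⟨d, hd⟩ := ih
    refine ⟨d + d * c + n, ?_⟩
    rw [pow_succ, hd]
    push_cast
    ring

lemma carl_unit_pow_aux {A : Type} [CommRing A] (p : ℕ) (j : ℕ) (t : A) :
    ∃ u, (1 + (p : A) * t) ^ (p ^ j) = 1 + (p : A) ^ (j + 1) * u := by
  induction j with
  | zero => exact ⟨t, by simp⟩
  | succ j ih =>
    obtain ⟨u, hu⟩ := ih
    obtain ⟨d, hd⟩ := carl_one_add_pow ((p : A) ^ (j + 1) * u) p
    refine ⟨u + (p : A) ^ j * u ^ 2 * d, ?_⟩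
    rw [pow_succ, pow_mul, hu, hd]
    ring

lemma carl_unit_pow {A : Type} [CommRing A] {p k : ℕ} (hp0 : (p : A) ^ (k + 1) = 0) (t : A) :
    (1 + (p : A) * t) ^ (p ^ k) = 1 := by
  obtain ⟨u, hu⟩ := carl_unit_pow_aux p k t
  rw [hu, hp0, zero_mul, add_zero]

lemma carl_pow_congr {A : Type} [Monoid A] {t : A} {e : ℕ} (he : t ^ e = 1) {a b : ℕ}
    (hab : a % e = b % e) : t ^ a = t ^ b := by
  have h1 : ∀ c : ℕ, t ^ c = t ^ (c % e) := fun c => by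
    conv_lhs => rw [← Nat.mod_add_div c e]
    rw [pow_add, pow_mul, he, one_pow, mul_one]
  rw [h1 a, h1 b, hab]

/-! ### The natural number sum -/

def carlT (e n a : ℕ) : ℕ := ∑ c ∈ Finset.range (n + 1), if e ∣ (a + c) then n.choose c else 0

/-! ### The Galois ring interface -/

structure CarlitzSetup (p f k : ℕ) (F A : Type) [Field F] [Fintype F] [CommRing A] where
  e : ℕ
  he : e + 1 = p ^ f
  hcard : Fintype.card F = e + 1
  zu : Fˣ
  hgen : ∀ u : Fˣ, u ∈ Subgroup.zpowers zu
  x : A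
  pi : A →+* F
  hpix : pi x = zu
  hxe : x ^ e = 1
  hker : ∀ b : A, pi b = 0 → ∃ c, b = (p : A) * c
  hp0 : (p : A) ^ (k + 1) = 0
  hunit : ∀ b : A, pi b ≠ 0 → IsUnit b

namespace CarlitzSetup

variable {p f k : ℕ} {F A : Type} [Field F] [Fintype F] [CommRing A]
variable (S : CarlitzSetup p f k F A)

lemma he0 (hp : p.Prime) (hf : 0 < f) : 0 < S.e := by
  have h1 : p ≤ p ^ f := Nat.le_self_pow hf.ne' p
  have h2 := hp.two_le
  have := S.he
  omega

lemma horder : orderOf S.zu = S.e := by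
  classical
  rw [orderOf_eq_card_of_forall_mem_zpowers S.hgen, Nat.card_eq_fintype_card,
    Fintype.card_units, S.hcard]
  omega

lemma pow_eq_pow {a b : ℕ} (h : (S.zu : F) ^ a = (S.zu : F) ^ b) : S.x ^ a = S.x ^ b := by
  have h2 : S.zu ^ a = S.zu ^ b := Units.ext (by push_cast; exact h)
  have h3 := pow_eq_pow_iff_modEq.mp h2
  rw [S.horder] at h3
  exact carl_pow_congr S.hxe h3

open Classical in
noncomputable def ind (S : CarlitzSetup p f k F A) (z : F) : ℕ :=
  if h : ∃ n : ℕ, (S.zu : F) ^ n = z then h.choose else 0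

noncomputable def tei (S : CarlitzSetup p f k F A) (z : F) : A := S.x ^ S.ind z

lemma exists_pow (z : F) (hz : z ≠ 0) : ∃ n : ℕ, (S.zu : F) ^ n = z := by
  obtain ⟨u, rfl⟩ := hz.isUnit
  obtain ⟨n, hn⟩ := (Submonoid.mem_powers_iff _ _).mp (mem_powers_iff_mem_zpowers.mpr (S.hgen u))
  exact ⟨n, by rw [← hn]; push_cast; ring⟩

lemma zeta_ind (z : F) (hz : z ≠ 0) : (S.zu : F) ^ S.ind z = z := by
  unfold ind
  classical
  rw [dif_pos (S.exists_pow z hz)]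
  exact (S.exists_pow z hz).choose_spec

lemma tei_eq (z : F) (hz : z ≠ 0) {n : ℕ} (hn : (S.zu : F) ^ n = z) : S.tei z = S.x ^ n :=
  S.pow_eq_pow (by rw [S.zeta_ind z hz, hn])

lemma pi_tei (z : F) (hz : z ≠ 0) : S.pi (S.tei z) = z := by
  unfold tei
  rw [map_pow, S.hpix, S.zeta_ind z hz]

lemma tei_mul (z w : F) (hz : z ≠ 0) (hw : w ≠ 0) : S.tei (z * w) = S.tei z * S.tei w := by
  have h := S.tei_eq (z * w) (mul_ne_zero hz hw)
    (n := S.ind z + S.ind w) (by rw [pow_add, S.zeta_ind z hz, S.zeta_ind w hw])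
  rw [h, pow_add]
  rfl

lemma tei_pow (z : F) (hz : z ≠ 0) (n : ℕ) : S.tei (z ^ n) = S.tei z ^ n := by
  have h := S.tei_eq (z ^ n) (pow_ne_zero n hz)
    (n := S.ind z * n) (by rw [pow_mul, S.zeta_ind z hz])
  rw [h, pow_mul]
  rfl

lemma tei_pow_e (z : F) (hz : z ≠ 0) : S.tei z ^ S.e = 1 := by
  unfold tei
  rw [← pow_mul, mul_comm, pow_mul, S.hxe, one_pow]

lemma tei_pow_congr (z : F) (hz : z ≠ 0) {a b : ℕ} (h : a % S.e = b % S.e) :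
    S.tei z ^ a = S.tei z ^ b :=
  carl_pow_congr (S.tei_pow_e z hz) h

lemma tei_one : S.tei 1 = 1 := by
  rw [S.tei_eq 1 one_ne_zero (n := 0) (pow_zero _), pow_zero]

lemma tei_sq_neg_one : S.tei (-1) ^ 2 = 1 := by
  rw [← S.tei_pow (-1) (neg_ne_zero.mpr one_ne_zero) 2]
  norm_num [S.tei_one]

lemma tei_neg_one [CharP F p] (hp : p.Prime) (hp2 : p ≠ 2) : S.tei (-1) = -1 := by
  have hn0 : (-1 : F) ≠ 0 := neg_ne_zero.mpr one_ne_zero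
  have ha2 : S.tei (-1) ^ 2 = 1 := S.tei_sq_neg_one
  have hpa : S.pi (S.tei (-1)) = -1 := S.pi_tei _ hn0
  have h2F : (2 : F) ≠ 0 := by
    intro h
    have h2 : ((2 : ℕ) : F) = 0 := by push_cast; exact h
    have := (CharP.cast_eq_zero_iff F p 2).mp h2
    exact hp2 ((Nat.prime_dvd_prime_iff_eq hp Nat.prime_two).mp this)
  have hu1 : IsUnit (S.tei (-1) - 1) := by
    apply S.hunit
    rw [map_sub, hpa, map_one]
    intro h
    exact h2F (by linear_combination -h)
  have hz : (S.tei (-1) - 1) * (S.tei (-1) + 1) = (S.tei (-1) - 1) * 0 := by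
    rw [mul_zero]
    linear_combination ha2
  have := hu1.mul_left_cancel hz
  linear_combination this

lemma tei_neg_one_char_two [CharP F p] (hp2 : p = 2) : S.tei (-1) = 1 := by
  subst hp2
  have h2 : ((2 : ℕ) : F) = 0 := CharP.cast_eq_zero F 2
  have : (-1 : F) = 1 := by push_cast at h2; linear_combination -h2
  rw [this, S.tei_one]


/-! ### The character sums -/

def Ssum (S : CarlitzSetup p f k F A) (a n : ℕ) : A :=
  ∑ i ∈ Finset.range S.e, S.x ^ (i * a) * (1 + S.x ^ i) ^ n

open Classical in
noncomputable def Jsum (S : CarlitzSetup p f k F A) (a b : ℕ) : A :=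
  ∑ z ∈ (Finset.univ.erase (0 : F)).erase (-1), S.tei z ^ a * S.tei (1 + z) ^ b

section Sums

open Classical

lemma mem_D {z : F} (hz : z ∈ (Finset.univ.erase (0 : F)).erase (-1)) :
    z ≠ 0 ∧ z ≠ -1 ∧ 1 + z ≠ 0 := by
  rw [Finset.mem_erase, Finset.mem_erase] at hz
  refine ⟨hz.2.1, hz.1, fun h => hz.1 (by linear_combination h)⟩

lemma mem_D_iff {z : F} : z ∈ (Finset.univ.erase (0 : F)).erase (-1) ↔ z ≠ 0 ∧ z ≠ -1 := by
  rw [Finset.mem_erase, Finset.mem_erase]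
  constructor
  · rintro ⟨h1, h2, _⟩; exact ⟨h2, h1⟩
  · rintro ⟨h1, h2⟩; exact ⟨h2, h1, Finset.mem_univ z⟩

/-- Step AB : `Ssum = Jsum` when the exponent is divisible by `p^k`. -/
lemma Ssum_eq_Jsum (hp : p.Prime) (hf : 0 < f) (S : CarlitzSetup p f k F A) (a c' : ℕ)
    (hc' : 0 < c') :
    S.Ssum a (c' * p ^ k) = S.Jsum a (c' * p ^ k) := by
  classical
  have hkn : k + 1 ≤ c' * p ^ k := by
    have h1 : k < p ^ k := Nat.lt_pow_self hp.one_lt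
    have h2 : p ^ k ≤ c' * p ^ k := Nat.le_mul_of_pos_left _ hc'
    omega
  set n := c' * p ^ k with hn
  -- Step 1 : reindex over nonzero field elements
  have step1 : S.Ssum a n = ∑ z ∈ Finset.univ.erase (0 : F), S.tei z ^ a * (1 + S.tei z) ^ n := by
    unfold Ssum
    apply Finset.sum_bij (i := fun i _ => ((S.zu : F)) ^ i)
    · intro i _
      exact Finset.mem_erase.mpr ⟨pow_ne_zero _ (Units.ne_zero S.zu), Finset.mem_univ _⟩
    · intro i hi j hj hij
      have h2 : S.zu ^ i = S.zu ^ j := Units.ext (by push_cast; exact hij)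
      have h3 := pow_eq_pow_iff_modEq.mp h2
      rw [S.horder] at h3
      rw [Finset.mem_range] at hi hj
      simpa [Nat.ModEq, Nat.mod_eq_of_lt hi, Nat.mod_eq_of_lt hj] using h3
    · intro z hz
      obtain ⟨n₀, hn₀⟩ := S.exists_pow z (Finset.mem_erase.mp hz).1
      refine ⟨n₀ % S.e, Finset.mem_range.mpr (Nat.mod_lt _ (S.he0 hp hf)), ?_⟩
      rw [← hn₀]
      have : S.zu ^ (n₀ % S.e) = S.zu ^ n₀ := by
        rw [← S.horder]; exact pow_mod_orderOf S.zu n₀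
      calc ((S.zu : F)) ^ (n₀ % S.e) = ((S.zu ^ (n₀ % S.e) : Fˣ) : F) := by push_cast; ring
      _ = ((S.zu ^ n₀ : Fˣ) : F) := by rw [this]
      _ = (S.zu : F) ^ n₀ := by push_cast; ring
    · intro i _
      have ht : S.tei ((S.zu : F) ^ i) = S.x ^ i :=
        S.tei_eq _ (pow_ne_zero _ (Units.ne_zero S.zu)) rfl
      rw [ht, pow_mul]
  -- Step 2 : drop the `z = -1` term
  have hm : (-1 : F) ∈ Finset.univ.erase (0 : F) :=
    Finset.mem_erase.mpr ⟨neg_ne_zero.mpr one_ne_zero, Finset.mem_univ _⟩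
  have step2 : ∑ z ∈ Finset.univ.erase (0 : F), S.tei z ^ a * (1 + S.tei z) ^ n
      = S.tei (-1) ^ a * (1 + S.tei (-1)) ^ n
        + ∑ z ∈ (Finset.univ.erase (0 : F)).erase (-1), S.tei z ^ a * (1 + S.tei z) ^ n :=
    (Finset.add_sum_erase _ _ hm).symm
  have hvanish : (1 + S.tei (-1)) ^ n = 0 := by
    have h0 : S.pi (1 + S.tei (-1)) = 0 := by
      rw [map_add, map_one, S.pi_tei _ (neg_ne_zero.mpr one_ne_zero)]
      ring
    obtain ⟨t, ht⟩ := S.hker _ h0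
    rw [ht, mul_pow]
    have : (p : A) ^ n = 0 := by
      have : (p : A) ^ n = (p : A) ^ (k + 1) * (p : A) ^ (n - (k + 1)) := by
        rw [← pow_add]; congr 1; omega
      rw [this, S.hp0, zero_mul]
    rw [this, zero_mul]
  -- Step 3 : pointwise identification on D
  have step3 : ∀ z ∈ (Finset.univ.erase (0 : F)).erase (-1),
      S.tei z ^ a * (1 + S.tei z) ^ n = S.tei z ^ a * S.tei (1 + z) ^ n := by
    intro z hz
    obtain ⟨hz0, hz1, h1z⟩ := mem_D hz
    congr 1
    set w := S.tei (1 + z) with hw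
    obtain ⟨u, hu⟩ := S.hunit w (by rw [S.pi_tei _ h1z]; exact h1z)
    have h0 : S.pi (1 + S.tei z - w) = 0 := by
      rw [map_sub, map_add, map_one, S.pi_tei _ hz0, S.pi_tei _ h1z]
      ring
    obtain ⟨t, ht⟩ := S.hker _ h0
    have huw : w * ↑u⁻¹ = 1 := by rw [← hu]; exact u.mul_inv
    have hform : w * (1 + (p : A) * (↑u⁻¹ * t)) = 1 + S.tei z := by
      calc w * (1 + (p : A) * (↑u⁻¹ * t)) = w + (w * ↑u⁻¹) * ((p : A) * t) := by ring
      _ = w + (p : A) * t := by rw [huw, one_mul]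
      _ = 1 + S.tei z := by linear_combination -ht
    have hy : (1 + (p : A) * (↑u⁻¹ * t)) ^ n = 1 := by
      rw [hn, mul_comm c' (p ^ k), pow_mul, carl_unit_pow S.hp0, one_pow]
    rw [← hform, mul_pow, hy, mul_one]
  rw [step1, step2, hvanish, mul_zero, zero_add]
  unfold Jsum
  exact Finset.sum_congr rfl step3

/-- Frobenius reindexing. -/
lemma Jsum_frob (hp : p.Prime) [CharP F p] (S : CarlitzSetup p f k F A) (a b : ℕ) :
    S.Jsum a b = S.Jsum (p * a) (p * b) := by
  classical
  haveI : Fact p.Prime := ⟨hp⟩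
  have hfr : ∀ z w : F, z ^ p = w ^ p → z = w := by
    intro z w h
    exact frobenius_inj F p (by rwa [frobenius_def, frobenius_def])
  have hneg : (-1 : F) ^ p = -1 := by
    rcases hp.eq_two_or_odd' with h2 | hodd
    · have hc : ((2 : ℕ) : F) = 0 := by rw [← h2]; exact CharP.cast_eq_zero F p
      have : (-1 : F) = 1 := by push_cast at hc; linear_combination -hc
      rw [this, one_pow]
    · exact hodd.neg_one_pow
  unfold Jsum
  symm
  apply Finset.sum_bij (i := fun z _ => z ^ p)
  · intro z hz
    obtain ⟨hz0, hz1, _⟩ := mem_D hz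
    refine mem_D_iff.mpr ⟨pow_ne_zero _ hz0, fun h => hz1 (hfr z (-1) ?_)⟩
    rw [h, hneg]
  · intro z₁ _ z₂ _ h
    exact hfr _ _ h
  · intro z hz
    obtain ⟨hz0, hz1⟩ := mem_D_iff.mp hz
    have hsurj : Function.Surjective (fun w : F => w ^ p) :=
      Finite.injective_iff_surjective.mp (fun z w => hfr z w)
    obtain ⟨w, hw⟩ := hsurj z
    simp only at hw
    refine ⟨w, mem_D_iff.mpr ⟨?_, ?_⟩, hw⟩
    · intro h; apply hz0; rw [← hw, h]; exact zero_pow hp.ne_zero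
    · intro h; apply hz1; rw [← hw, h, hneg]
  · intro z hz
    obtain ⟨hz0, hz1, h1z⟩ := mem_D hz
    have h1 : S.tei (z ^ p) = S.tei z ^ p := S.tei_pow z hz0 p
    have h2 : (1 : F) + z ^ p = (1 + z) ^ p := by
      rw [add_pow_char, one_pow]
    rw [h1, h2, S.tei_pow _ h1z, ← pow_mul, ← pow_mul]

lemma Jsum_frob_iter (hp : p.Prime) [CharP F p] (S : CarlitzSetup p f k F A) (a b j : ℕ) :
    S.Jsum a b = S.Jsum (p ^ j * a) (p ^ j * b) := by
  induction j with
  | zero => simp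
  | succ j ih =>
    rw [ih, Jsum_frob hp S (p ^ j * a) (p ^ j * b), ← mul_assoc, ← mul_assoc, ← pow_succ']

lemma Jsum_mod (S : CarlitzSetup p f k F A) {a a' b b' : ℕ} (ha : a % S.e = a' % S.e)
    (hb : b % S.e = b' % S.e) : S.Jsum a b = S.Jsum a' b' := by
  classical
  unfold Jsum
  apply Finset.sum_congr rfl
  intro z hz
  obtain ⟨hz0, _, h1z⟩ := mem_D hz
  rw [S.tei_pow_congr z hz0 ha, S.tei_pow_congr _ h1z hb]

lemma Jsum_swap (S : CarlitzSetup p f k F A) (a b : ℕ) :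
    S.Jsum a b = S.tei (-1) ^ (a + b) * S.Jsum b a := by
  classical
  unfold Jsum
  rw [Finset.mul_sum]
  apply Finset.sum_bij (i := fun z _ => -1 - z)
  · intro z hz
    obtain ⟨hz0, hz1, _⟩ := mem_D hz
    refine mem_D_iff.mpr ⟨fun h => hz1 (by linear_combination -h), fun h => hz0 (by linear_combination -h)⟩
  · intro z₁ _ z₂ _ h
    linear_combination -h
  · intro z hz
    obtain ⟨hz0, hz1⟩ := mem_D_iff.mp hz
    refine ⟨-1 - z, mem_D_iff.mpr ⟨fun h => hz1 (by linear_combination -h), fun h => hz0 (by linear_combination -h)⟩, by ring⟩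
  · intro z hz
    obtain ⟨hz0, hz1, h1z⟩ := mem_D hz
    have e1 : (1 : F) + (-1 - z) = -z := by ring
    have e2 : (-1 - z : F) = (-1) * (1 + z) := by ring
    have e3 : (-z : F) = (-1) * z := by ring
    have hn0 : (-1 : F) ≠ 0 := neg_ne_zero.mpr one_ne_zero
    rw [e1, e2, e3, S.tei_mul _ _ hn0 h1z, S.tei_mul _ _ hn0 hz0]
    have hsq : S.tei (-1) ^ (a + b) * (S.tei (-1) ^ b * S.tei (-1) ^ a) = 1 := by
      rw [← pow_add, ← pow_add, show a + b + (b + a) = 2 * (a + b) by ring, pow_mul,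
        S.tei_sq_neg_one, one_pow]
    symm
    calc S.tei (-1) ^ (a + b) * ((S.tei (-1) * S.tei (1 + z)) ^ b * (S.tei (-1) * S.tei z) ^ a)
        = (S.tei (-1) ^ (a + b) * (S.tei (-1) ^ b * S.tei (-1) ^ a))
            * (S.tei (1 + z) ^ b * S.tei z ^ a) := by
          rw [mul_pow, mul_pow]; ring
      _ = S.tei z ^ a * S.tei (1 + z) ^ b := by rw [hsq, one_mul]; ring

/-- Geometric sum over the roots of unity. -/
lemma geom (S : CarlitzSetup p f k F A) (j : ℕ) :
    ∑ i ∈ Finset.range S.e, (S.x ^ j) ^ i = if S.e ∣ j then ((S.e : ℕ) : A) else 0 := by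
  split_ifs with hd
  · have hx1 : S.x ^ j = 1 := by
      have : S.x ^ j = S.x ^ 0 := carl_pow_congr S.hxe (by
        rcases hd with ⟨c, rfl⟩
        simp [Nat.mul_mod_right])
      simpa using this
    rw [hx1]
    simp
  · have hXe : (S.x ^ j) ^ S.e = 1 := by
      rw [← pow_mul, mul_comm, pow_mul, S.hxe, one_pow]
    have h0 : (∑ i ∈ Finset.range S.e, (S.x ^ j) ^ i) * (S.x ^ j - 1) = 0 := by
      rw [geom_sum_mul, hXe, sub_self]
    have hu : IsUnit (S.x ^ j - 1) := by
      apply S.hunit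
      rw [map_sub, map_pow, S.hpix, map_one]
      intro h
      have hz1 : S.zu ^ j = 1 := Units.ext (by push_cast; linear_combination h)
      exact hd (S.horder ▸ orderOf_dvd_iff_pow_eq_one.mpr hz1)
    have h0' : (∑ i ∈ Finset.range S.e, (S.x ^ j) ^ i) * (S.x ^ j - 1) = 0 * (S.x ^ j - 1) := by
      rw [h0, zero_mul]
    exact hu.mul_right_cancel h0'

/-- The character sum computes the binomial sum. -/
lemma Ssum_eq_carlT (S : CarlitzSetup p f k F A) (a n : ℕ) :
    S.Ssum a n = ((S.e : ℕ) : A) * ((carlT S.e n a : ℕ) : A) := by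
  classical
  unfold Ssum
  have hbinom : ∀ i : ℕ, (1 + S.x ^ i) ^ n
      = ∑ c ∈ Finset.range (n + 1), (S.x ^ i) ^ c * ((n.choose c : ℕ) : A) := by
    intro i
    rw [add_comm, add_pow]
    exact Finset.sum_congr rfl fun c _ => by rw [one_pow, mul_one]
  calc ∑ i ∈ Finset.range S.e, S.x ^ (i * a) * (1 + S.x ^ i) ^ n
      = ∑ i ∈ Finset.range S.e, ∑ c ∈ Finset.range (n + 1),
          ((n.choose c : ℕ) : A) * (S.x ^ (a + c)) ^ i := by
        apply Finset.sum_congr rfl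
        intro i _
        rw [hbinom i, Finset.mul_sum]
        apply Finset.sum_congr rfl
        intro c _
        have hxx : (S.x ^ (a + c)) ^ i = S.x ^ (i * a) * S.x ^ (i * c) := by
          rw [← pow_add, ← pow_mul]
          congr 1
          ring
        rw [← pow_mul S.x i c, hxx]
        ring
    _ = ∑ c ∈ Finset.range (n + 1), ((n.choose c : ℕ) : A)
          * (∑ i ∈ Finset.range S.e, (S.x ^ (a + c)) ^ i) := by
        rw [Finset.sum_comm]
        exact Finset.sum_congr rfl fun c _ => by rw [Finset.mul_sum]
    _ = ∑ c ∈ Finset.range (n + 1), ((S.e : ℕ) : A)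
          * (if S.e ∣ (a + c) then ((n.choose c : ℕ) : A) else 0) := by
        apply Finset.sum_congr rfl
        intro c _
        rw [S.geom (a + c)]
        split_ifs <;> ring
    _ = ((S.e : ℕ) : A) * ((carlT S.e n a : ℕ) : A) := by
        rw [← Finset.mul_sum]
        congr 1
        unfold carlT
        push_cast
        apply Finset.sum_congr rfl
        intro c _
        split_ifs <;> simp

/-- The main abstract symmetry theorem. -/
theorem main (hp : p.Prime) (hf : 0 < f) [CharP F p] (S : CarlitzSetup p f k F A)
    (h r s : ℕ) (hkh : k ≤ h) (hfhk : f ∣ h + k) (hr : 0 < r) (hs : 0 < s) :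
    ((S.e : ℕ) : A) * ((-1) ^ (p * s) * ((carlT S.e (s * p ^ k) r : ℕ) : A))
      = ((S.e : ℕ) : A) * ((-1) ^ (p * r) * ((carlT S.e (r * p ^ h) s : ℕ) : A)) := by
  -- the chain of identities
  have h2 : S.Ssum s (r * p ^ h) = S.Jsum s (r * p ^ h) := by
    have hform : r * p ^ h = (r * p ^ (h - k)) * p ^ k := by
      rw [mul_assoc, ← pow_add]
      congr 2
      omega
    rw [hform]
    exact Ssum_eq_Jsum hp hf S s _ (Nat.mul_pos hr (pow_pos hp.pos _))
  have h3 : S.Jsum s (r * p ^ h) = S.Jsum (p ^ k * s) (p ^ k * (r * p ^ h)) :=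
    Jsum_frob_iter hp S _ _ k
  have hmod1 : p ^ (h + k) % S.e = 1 % S.e := by
    obtain ⟨m, hm⟩ := hfhk
    have hdvd : S.e ∣ p ^ (h + k) - 1 := by
      have := Nat.sub_dvd_pow_sub_pow (p ^ f) 1 m
      rw [one_pow, ← pow_mul, ← hm] at this
      have he' : p ^ f - 1 = S.e := by have := S.he; omega
      rwa [he'] at this
    have h1le : 1 ≤ p ^ (h + k) := Nat.one_le_pow _ _ hp.pos
    exact ((Nat.modEq_iff_dvd' h1le).mpr hdvd).symm
  have h4 : S.Jsum (p ^ k * s) (p ^ k * (r * p ^ h)) = S.Jsum (s * p ^ k) r := by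
    apply Jsum_mod
    · rw [mul_comm]
    · have hform : p ^ k * (r * p ^ h) = r * p ^ (h + k) := by
        rw [pow_add]; ring
      rw [hform]
      have := Nat.ModEq.mul_left r (hmod1 : p ^ (h + k) ≡ 1 [MOD S.e])
      simpa [Nat.ModEq] using this
  have h5 : S.Jsum (s * p ^ k) r = S.tei (-1) ^ (s * p ^ k + r) * S.Jsum r (s * p ^ k) :=
    Jsum_swap S _ _
  have h6 : S.Jsum r (s * p ^ k) = S.Ssum r (s * p ^ k) :=
    (Ssum_eq_Jsum hp hf S r s hs).symm
  have key : ((S.e : ℕ) : A) * ((carlT S.e (r * p ^ h) s : ℕ) : A)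
      = S.tei (-1) ^ (s * p ^ k + r) * (((S.e : ℕ) : A) * ((carlT S.e (s * p ^ k) r : ℕ) : A)) := by
    rw [← Ssum_eq_carlT, ← Ssum_eq_carlT, h2, h3, h4, h5, h6]
  have hsign : ((-1 : A)) ^ (p * s) = (-1) ^ (p * r) * S.tei (-1) ^ (s * p ^ k + r) := by
    rcases hp.eq_two_or_odd' with hp2 | hodd
    · rw [S.tei_neg_one_char_two hp2, one_pow, mul_one, hp2]
      rw [pow_mul, pow_mul]
      norm_num
    · have hν := S.tei_neg_one hp (by rintro rfl; obtain ⟨t, ht⟩ := hodd; omega)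
      rw [hν, ← pow_add]
      apply carl_pow_congr (t := (-1 : A)) (e := 2) (by norm_num)
      have hp1 : p % 2 = 1 := Nat.odd_iff.mp hodd
      have hpk : p ^ k % 2 = 1 := Nat.odd_iff.mp (hodd.pow)
      have hmp : p ≡ 1 [MOD 2] := by unfold Nat.ModEq; omega
      have hmpk : p ^ k ≡ 1 [MOD 2] := by unfold Nat.ModEq; omega
      have e2 : 1 * r ≡ p * r [MOD 2] := Nat.ModEq.mul_right r hmp.symm
      have e3 : s * 1 ≡ s * p ^ k [MOD 2] := Nat.ModEq.mul_left s hmpk.symm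
      have hfin : p * s ≡ p * r + (s * p ^ k + r) [MOD 2] := by
        calc p * s ≡ 1 * s [MOD 2] := Nat.ModEq.mul_right s hmp
        _ ≡ 1 * r + (s * 1 + r) [MOD 2] := by unfold Nat.ModEq; simp; omega
        _ ≡ p * r + (s * p ^ k + r) [MOD 2] := Nat.ModEq.add e2 (Nat.ModEq.add e3 (Nat.ModEq.refl r))
      exact hfin
  calc ((S.e : ℕ) : A) * ((-1) ^ (p * s) * ((carlT S.e (s * p ^ k) r : ℕ) : A))
      = (-1) ^ (p * r) * (S.tei (-1) ^ (s * p ^ k + r)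
          * (((S.e : ℕ) : A) * ((carlT S.e (s * p ^ k) r : ℕ) : A))) := by
        rw [hsign]; ring
    _ = (-1) ^ (p * r) * (((S.e : ℕ) : A) * ((carlT S.e (r * p ^ h) s : ℕ) : A)) := by
        rw [← key]
    _ = ((S.e : ℕ) : A) * ((-1) ^ (p * r) * ((carlT S.e (r * p ^ h) s : ℕ) : A)) := by ring

end Sums

end CarlitzSetup

/-! ### Construction of the Galois ring -/

theorem carlitz_exists (p f k : ℕ) (hp : p.Prime) (hf : 0 < f) :
    ∃ (F A : Type) (iF : Field F) (iFt : Fintype F) (_iCh : CharP F p) (iA : CommRing A)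
      (S : @CarlitzSetup p f k F A iF iFt iA) (ψ : ZMod (p ^ (k + 1)) →+* A),
      Function.Injective ψ ∧ S.e = p ^ f - 1 := by
  haveI hfact : Fact p.Prime := ⟨hp⟩
  classical
  set F := GaloisField p f with hF
  haveI iFt : Fintype F := Fintype.ofFinite F
  have hcard : Fintype.card F = p ^ f := by
    rw [← Nat.card_eq_fintype_card]
    exact GaloisField.card p f hf.ne'
  obtain ⟨zu, hgen⟩ := IsCyclic.exists_generator (α := Fˣ)
  set e := p ^ f - 1 with he_def
  have hq2 : 2 ≤ p ^ f := le_trans hp.two_le (Nat.le_self_pow hf.ne' p)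
  have he : e + 1 = p ^ f := by omega
  have he0 : 0 < e := by omega
  set N := p ^ (k + 1) with hN
  haveI : NeZero N := ⟨pow_ne_zero _ hp.pos.ne'⟩
  set P : Polynomial (ZMod N) := X ^ e - 1 with hP
  have hdvd : p ∣ N := dvd_pow_self p (Nat.succ_ne_zero k)
  set ρ : ZMod N →+* ZMod p := ZMod.castHom hdvd (ZMod p) with hρ
  set π₀ : ZMod N →+* F := (algebraMap (ZMod p) F).comp ρ with hπ₀
  set ζ : F := (zu : F) with hζ
  have hordu : orderOf zu = e := by
    rw [orderOf_eq_card_of_forall_mem_zpowers hgen, Nat.card_eq_fintype_card,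
      Fintype.card_units, hcard]
  have hζe : ζ ^ e = 1 := by
    have h1 : zu ^ e = 1 := by rw [← hordu]; exact pow_orderOf_eq_one zu
    calc ζ ^ e = ((zu ^ e : Fˣ) : F) := by push_cast; ring
    _ = 1 := by rw [h1]; rfl
  have hev : eval₂ π₀ ζ P = 0 := by
    rw [hP, eval₂_sub, eval₂_one, eval₂_X_pow, hζe, sub_self]
  set B := AdjoinRoot P with hB
  set π : B →+* F := AdjoinRoot.lift π₀ ζ hev with hπ
  have hπx : π (AdjoinRoot.root P) = ζ := AdjoinRoot.lift_root hev
  have hπsurj : Function.Surjective π := by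
    intro y
    by_cases hy : y = 0
    · exact ⟨0, by rw [map_zero, hy]⟩
    · have hyu : IsUnit y := isUnit_iff_ne_zero.mpr hy
      obtain ⟨n, hn⟩ := (Submonoid.mem_powers_iff _ _).mp
        (mem_powers_iff_mem_zpowers.mpr (hgen hyu.unit))
      refine ⟨(AdjoinRoot.root P) ^ n, ?_⟩
      rw [map_pow, hπx]
      calc ζ ^ n = ((zu ^ n : Fˣ) : F) := by push_cast; ring
      _ = y := by rw [hn]; exact hyu.unit_spec
  set M : Ideal B := RingHom.ker π with hM
  haveI hMmax : M.IsMaximal := RingHom.ker_isMaximal_of_surjective π hπsurj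
  haveI hMprime : M.IsPrime := hMmax.isPrime
  set A := Localization.AtPrime M with hA
  set φ : B →+* A := algebraMap B A with hφ
  have hg : ∀ y : M.primeCompl, IsUnit (π (y : B)) := by
    intro y
    have hy : (y : B) ∉ M := y.2
    exact isUnit_iff_ne_zero.mpr (fun h0 => hy (RingHom.mem_ker.mpr h0))
  set πl : A →+* F := IsLocalization.lift hg with hπl_def
  have hπl : ∀ b : B, πl (φ b) = π b := fun b => IsLocalization.lift_eq hg b
  -- ℤ[X] plumbing
  set ρZ : ℤ →+* ZMod N := Int.castRingHom (ZMod N) with hρZ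
  set ρp : ℤ →+* ZMod p := Int.castRingHom (ZMod p) with hρp
  set ρF : ℤ →+* F := Int.castRingHom F with hρF
  have hrep : ∀ b : B, ∃ G : Polynomial ℤ, AdjoinRoot.mk P (G.map ρZ) = b := by
    intro b
    obtain ⟨g, rfl⟩ := AdjoinRoot.mk_surjective b
    obtain ⟨G, hG⟩ := Polynomial.map_surjective ρZ ZMod.intCast_surjective g
    exact ⟨G, by rw [hG]⟩
  have heval : ∀ G : Polynomial ℤ, π (AdjoinRoot.mk P (G.map ρZ)) = eval₂ ρF ζ G := by
    intro G
    rw [hπ, AdjoinRoot.lift_mk, eval₂_map]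
    congr 1 <;> exact Subsingleton.elim _ _
  -- minpoly facts
  set m : Polynomial (ZMod p) := minpoly (ZMod p) ζ with hm
  have hm_dvd : m ∣ X ^ e - 1 := minpoly.dvd (ZMod p) ζ (by
    rw [map_sub, map_pow, aeval_X, map_one, hζe, sub_self])
  obtain ⟨w, hw⟩ := hm_dvd
  have hpe : ¬ (p ∣ e) := by
    intro hpd
    have h1 : p ∣ p ^ f := dvd_pow_self p hf.ne'
    have h2 : p ∣ 1 := by
      have h3 := Nat.dvd_sub h1 hpd
      rwa [show p ^ f - e = 1 by omega] at h3
    exact hp.one_lt.ne' (Nat.dvd_one.mp h2)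
  have hsep : (X ^ e - 1 : Polynomial (ZMod p)).Separable := by
    rw [← C_1]
    refine separable_X_pow_sub_C 1 ?_ one_ne_zero
    rw [Ne, ZMod.natCast_eq_zero_iff]
    exact hpe
  have hcop : IsCoprime m w := by
    have h1 := hsep
    rw [hw] at h1
    exact h1.isCoprime
  have hwζ : aeval ζ w ≠ 0 := by
    obtain ⟨u1, u2, huv⟩ := hcop
    intro h0
    have h1 := congrArg (aeval ζ) huv
    rw [map_add, map_mul, map_mul, map_one, show aeval ζ m = 0 from minpoly.aeval _ _, h0,
      mul_zero, mul_zero, add_zero] at h1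
    exact zero_ne_one h1
  -- the kernel lemma at the level of B
  have hBker : ∀ u : B, π u = 0 → ∃ t c : B, π t ≠ 0 ∧ t * u = (p : B) * c := by
    intro u hu
    obtain ⟨G, rfl⟩ := hrep u
    have hGζ : aeval ζ (G.map ρp) = 0 := by
      have h1 : aeval ζ (G.map ρp) = eval₂ ρF ζ G := by
        rw [aeval_def, eval₂_map]
        congr 1 <;> exact Subsingleton.elim _ _
      rw [h1, ← heval G]
      exact hu
    obtain ⟨V, hV⟩ := minpoly.dvd (ZMod p) ζ hGζ
    obtain ⟨W', hW'⟩ := Polynomial.map_surjective ρp ZMod.intCast_surjective w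
    obtain ⟨V', hV'⟩ := Polynomial.map_surjective ρp ZMod.intCast_surjective V
    have hmodp : (W' * G - (X ^ e - 1) * V').map ρp = 0 := by
      simp only [Polynomial.map_sub, Polynomial.map_mul, Polynomial.map_pow, Polynomial.map_X,
        Polynomial.map_one, hW', hV', hV, hw]
      ring
    have hdvdp : C (p : ℤ) ∣ (W' * G - (X ^ e - 1) * V') := by
      rw [C_dvd_iff_dvd_coeff]
      intro i
      have h2 : (Polynomial.map ρp (W' * G - (X ^ e - 1) * V')).coeff i = 0 := by
        rw [hmodp, Polynomial.coeff_zero]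
      rw [Polynomial.coeff_map] at h2
      have h3 : (((W' * G - (X ^ e - 1) * V').coeff i : ℤ) : ZMod p) = 0 := by simpa using h2
      exact_mod_cast (ZMod.intCast_zmod_eq_zero_iff_dvd _ p).mp h3
    obtain ⟨K, hK⟩ := hdvdp
    refine ⟨AdjoinRoot.mk P (W'.map ρZ), AdjoinRoot.mk P (K.map ρZ), ?_, ?_⟩
    · rw [heval W']
      have h1 : eval₂ ρF ζ W' = aeval ζ w := by
        rw [← hW', aeval_def, eval₂_map]
        congr 1 <;> exact Subsingleton.elim _ _
      rw [h1]
      exact hwζ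
    · rw [← map_mul, ← Polynomial.map_mul]
      have hKmap : (W' * G).map ρZ = P * (V'.map ρZ) + ((p : ℕ) : Polynomial (ZMod N)) * (K.map ρZ) := by
        have h1 := congrArg (Polynomial.map ρZ) hK
        simp only [Polynomial.map_sub, Polynomial.map_mul, Polynomial.map_pow, Polynomial.map_X,
          Polynomial.map_one, Polynomial.map_C] at h1
        have hCp : (C (ρZ ((p : ℤ))) : Polynomial (ZMod N)) = ((p : ℕ) : Polynomial (ZMod N)) := by
          rw [show (ρZ ((p : ℤ))) = ((p : ℕ) : ZMod N) by rw [hρZ]; simp,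
            Polynomial.C_eq_natCast]
        rw [hCp] at h1
        rw [hP, Polynomial.map_mul]
        linear_combination h1
      rw [hKmap, map_add, map_mul, map_mul, AdjoinRoot.mk_self, zero_mul, zero_add, map_natCast]
  -- hker at the level of A
  have hkerA : ∀ b : A, πl b = 0 → ∃ c, b = (p : A) * c := by
    intro b hb
    obtain ⟨⟨u, t⟩, hut⟩ := IsLocalization.mk'_surjective M.primeCompl b
    replace hut : IsLocalization.mk' A u t = b := hut
    have hspec := IsLocalization.mk'_spec A u t
    have hπu : π u = 0 := by
      have h1 := congrArg πl hspec
      rw [map_mul, hut, hb, zero_mul, hπl] at h1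
      exact h1.symm
    obtain ⟨t₀, c, ht₀, htc⟩ := hBker u hπu
    have ht₀' : t₀ ∈ M.primeCompl := by
      intro hmem
      exact ht₀ (RingHom.mem_ker.mp hmem)
    obtain ⟨v1, hv1⟩ := IsLocalization.map_units A ⟨t₀, ht₀'⟩
    obtain ⟨v2, hv2⟩ := IsLocalization.map_units A t
    have hb2 : φ t₀ * (φ (t : B) * b) = (p : A) * φ c := by
      have h1 : φ (t : B) * b = φ u := by rw [← hut, mul_comm]; exact hspec
      rw [h1, ← map_mul, htc, map_mul, map_natCast]
    have hi1 : (↑v1⁻¹ : A) * φ t₀ = 1 := by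
      rw [show φ t₀ = (v1 : A) from hv1.symm]
      exact v1.inv_mul
    have hi2 : (↑v2⁻¹ : A) * φ (t : B) = 1 := by
      rw [show φ (t : B) = (v2 : A) from hv2.symm]
      exact v2.inv_mul
    refine ⟨(↑v1⁻¹ * ↑v2⁻¹ : A) * φ c, ?_⟩
    calc b = ((↑v1⁻¹ : A) * φ t₀) * (((↑v2⁻¹ : A) * φ (t : B)) * b) := by
          rw [hi1, hi2, one_mul, one_mul]
    _ = (↑v1⁻¹ : A) * ↑v2⁻¹ * (φ t₀ * (φ (t : B) * b)) := by ring
    _ = (↑v1⁻¹ : A) * ↑v2⁻¹ * ((p : A) * φ c) := by rw [hb2]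
    _ = (p : A) * ((↑v1⁻¹ * ↑v2⁻¹ : A) * φ c) := by ring
  -- hunit at the level of A
  have hunitA : ∀ b : A, πl b ≠ 0 → IsUnit b := by
    intro b hb
    obtain ⟨⟨u, t⟩, hut⟩ := IsLocalization.mk'_surjective M.primeCompl b
    replace hut : IsLocalization.mk' A u t = b := hut
    have hspec := IsLocalization.mk'_spec A u t
    rw [hut] at hspec
    have hπu : π u ≠ 0 := by
      intro h0
      apply hb
      have h1 := congrArg πl hspec
      rw [map_mul, hπl, hπl, h0] at h1
      have ht0 : π (t : B) ≠ 0 := IsUnit.ne_zero (hg t)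
      rcases mul_eq_zero.mp h1 with h | h
      · exact h
      · exact absurd h ht0
    have hu' : u ∈ M.primeCompl := by
      intro hmem
      exact hπu (RingHom.mem_ker.mp hmem)
    have hu1 : IsUnit (φ u) := IsLocalization.map_units A ⟨u, hu'⟩
    rw [← hspec] at hu1
    exact isUnit_of_mul_isUnit_left hu1
  -- p^(k+1) = 0 in A
  have hNA : ((N : ℕ) : A) = 0 := by
    have h1 : ((N : ℕ) : B) = 0 := by
      have h2 : ((N : ℕ) : B) = algebraMap (ZMod N) B ((N : ℕ) : ZMod N) :=
        (map_natCast (algebraMap (ZMod N) B) N).symm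
      rw [h2, ZMod.natCast_self, map_zero]
    rw [show ((N : ℕ) : A) = φ ((N : ℕ) : B) from (map_natCast φ N).symm, h1, map_zero]
  have hp0A : (p : A) ^ (k + 1) = 0 := by
    have h1 : ((p : ℕ) : A) ^ (k + 1) = ((N : ℕ) : A) := by
      show ((p : ℕ) : A) ^ (k + 1) = ((p ^ (k + 1) : ℕ) : A)
      push_cast
      ring
    rw [← h1] at hNA
    exact_mod_cast hNA
  -- x ^ e = 1 in A
  set xA : A := φ (AdjoinRoot.root P) with hxA
  have hxe : xA ^ e = 1 := by
    have h1 : (AdjoinRoot.root P) ^ e - 1 = 0 := by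
      have h2 : AdjoinRoot.mk P P = 0 := AdjoinRoot.mk_self
      rw [hP, map_sub, map_pow, map_one, AdjoinRoot.mk_X] at h2
      exact h2
    have h3 : (AdjoinRoot.root P) ^ e = 1 := by
      have := sub_eq_zero.mp h1
      exact this
    rw [hxA, ← map_pow, h3, map_one]
  -- (p : A)^k ≠ 0
  have hpk : (p : A) ^ k ≠ 0 := by
    intro h0
    have h1 : φ (((p : ℕ) ^ k : ℕ) : B) = 0 := by
      rw [map_natCast]
      push_cast
      exact_mod_cast h0
    obtain ⟨tm, htm⟩ := (IsLocalization.map_eq_zero_iff M.primeCompl A _).mp h1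
    obtain ⟨G, hG⟩ := hrep (tm : B)
    have hdv : P ∣ (G.map ρZ) * (((p : ℕ) ^ k : ℕ) : Polynomial (ZMod N)) := by
      rw [← AdjoinRoot.mk_eq_zero, map_mul, map_natCast, hG]
      exact htm
    obtain ⟨Hq, hHq⟩ := hdv
    obtain ⟨H, hH⟩ := Polynomial.map_surjective ρZ ZMod.intCast_surjective Hq
    have hNdvd : C ((p : ℤ) ^ (k + 1)) ∣ (G * C ((p : ℤ) ^ k) - (X ^ e - 1) * H) := by
      rw [C_dvd_iff_dvd_coeff]
      intro i
      have h2 : (G * C ((p : ℤ) ^ k) - (X ^ e - 1) * H).map ρZ = 0 := by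
        simp only [Polynomial.map_sub, Polynomial.map_mul, Polynomial.map_pow, Polynomial.map_X,
          Polynomial.map_one, Polynomial.map_C, hH]
        have hCpk : (C (ρZ ((p : ℤ) ^ k)) : Polynomial (ZMod N))
            = (((p : ℕ) ^ k : ℕ) : Polynomial (ZMod N)) := by
          rw [show (ρZ ((p : ℤ) ^ k)) = (((p : ℕ) ^ k : ℕ) : ZMod N) by
            rw [hρZ]; simp, Polynomial.C_eq_natCast]
        rw [hCpk, show (X ^ e - 1 : Polynomial (ZMod N)) = P from hP.symm, ← hHq]
        ring
      have h3 : (((G * C ((p : ℤ) ^ k) - (X ^ e - 1) * H).coeff i : ℤ) : ZMod N) = 0 := by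
        have h4 : (Polynomial.map ρZ (G * C ((p : ℤ) ^ k) - (X ^ e - 1) * H)).coeff i = 0 := by
          rw [h2, Polynomial.coeff_zero]
        rw [Polynomial.coeff_map] at h4
        simpa using h4
      have h5 := (ZMod.intCast_zmod_eq_zero_iff_dvd _ N).mp h3
      rwa [hN, show (((p ^ (k + 1) : ℕ)) : ℤ) = (p : ℤ) ^ (k + 1) by push_cast; ring] at h5
    obtain ⟨K, hK⟩ := hNdvd
    -- downward induction
    have hstep : ∀ (j : ℕ), ∀ H K : Polynomial ℤ,
        (C ((p : ℤ)) ^ j * G = (X ^ e - 1) * H + C ((p : ℤ)) ^ (j + 1) * K) →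
        ∃ H' K' : Polynomial ℤ, G = (X ^ e - 1) * H' + C ((p : ℤ)) * K' := by
      intro j
      induction j with
      | zero =>
        intro H K hHK
        exact ⟨H, K, by rw [pow_zero, one_mul] at hHK; rw [hHK, pow_one]⟩
      | succ j ih =>
        intro H K hHK
        have h1 : (X ^ e - 1 : Polynomial (ZMod p)) * (H.map ρp) = 0 := by
          have h2 := congrArg (Polynomial.map ρp) hHK
          simp only [Polynomial.map_add, Polynomial.map_mul, Polynomial.map_pow,
            Polynomial.map_sub, Polynomial.map_X, Polynomial.map_one, Polynomial.map_C] at h2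
          have hpp : ρp ((p : ℤ)) = 0 := by
            rw [hρp]
            simp
          rw [hpp, Polynomial.C_0] at h2
          rw [zero_pow (Nat.succ_ne_zero j), zero_mul, zero_pow (Nat.succ_ne_zero (j+1)),
            zero_mul, add_zero] at h2
          exact h2.symm
        have h2 : H.map ρp = 0 := by
          rcases mul_eq_zero.mp h1 with h | h
          · exfalso
            have hmon : (X ^ e - 1 : Polynomial (ZMod p)).Monic := by
              rw [← C_1]
              exact monic_X_pow_sub_C 1 he0.ne'
            exact hmon.ne_zero h
          · exact h
        have h3 : C ((p : ℤ)) ∣ H := by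
          rw [C_dvd_iff_dvd_coeff]
          intro i
          have h4 : ((H.coeff i : ℤ) : ZMod p) = 0 := by
            have h5 : (Polynomial.map ρp H).coeff i = 0 := by rw [h2, Polynomial.coeff_zero]
            rw [Polynomial.coeff_map] at h5
            simpa using h5
          exact_mod_cast (ZMod.intCast_zmod_eq_zero_iff_dvd _ p).mp h4
        obtain ⟨H₂, hH₂⟩ := h3
        apply ih H₂ K
        have hc : (C ((p : ℤ)) : Polynomial ℤ) ≠ 0 := by
          rw [Ne, Polynomial.C_eq_zero]
          exact_mod_cast hp.pos.ne'
        apply mul_left_cancel₀ hc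
        rw [hH₂] at hHK
        calc C ((p : ℤ)) * (C ((p : ℤ)) ^ j * G) = C ((p : ℤ)) ^ (j + 1) * G := by ring
        _ = (X ^ e - 1) * (C ((p : ℤ)) * H₂) + C ((p : ℤ)) ^ (j + 2) * K := hHK
        _ = C ((p : ℤ)) * ((X ^ e - 1) * H₂ + C ((p : ℤ)) ^ (j + 1) * K) := by ring
    obtain ⟨H', K', hGf⟩ := hstep k H K (by
      have hCpows : (C ((p : ℤ) ^ k) : Polynomial ℤ) = C ((p : ℤ)) ^ k := by
        rw [Polynomial.C_pow]
      have hCpows1 : (C ((p : ℤ) ^ (k + 1)) : Polynomial ℤ) = C ((p : ℤ)) ^ (k + 1) := by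
        rw [Polynomial.C_pow]
      rw [hCpows, hCpows1] at hK
      linear_combination hK)
    have hπtm : π (tm : B) = 0 := by
      rw [← hG, heval G, hGf]
      rw [eval₂_add, eval₂_mul, eval₂_mul, eval₂_sub, eval₂_pow, eval₂_X, eval₂_one, hζe,
        sub_self, zero_mul, eval₂_C, zero_add]
      have hpF : ρF ((p : ℤ)) = 0 := by
        rw [hρF]
        simp only [eq_intCast, Int.cast_natCast]
        exact CharP.cast_eq_zero F p
      rw [hpF, zero_mul]
    exact tm.2 (RingHom.mem_ker.mpr hπtm)
  -- ψ and its injectivity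
  set ψ : ZMod N →+* A := φ.comp (algebraMap (ZMod N) B) with hψ
  have hψ0 : ∀ d : ZMod N, ψ d = 0 → d = 0 := by
    intro d hd
    by_contra hd0
    have hval0 : d.val ≠ 0 := fun h => hd0 ((ZMod.val_eq_zero d).mp h)
    obtain ⟨j, v, hv, hval⟩ := Nat.exists_eq_pow_mul_and_not_dvd hval0 p hp.ne_one
    have hv0 : v ≠ 0 := fun h => hv (h ▸ dvd_zero p)
    have hd_eq : d = (p : ZMod N) ^ j * ((v : ℕ) : ZMod N) := by
      have h1 : ((d.val : ℕ) : ZMod N) = d := ZMod.natCast_rightInverse d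
      rw [← h1, hval]
      push_cast
      ring
    have hco : Nat.Coprime v N := by
      show Nat.Coprime v (p ^ (k + 1))
      exact (Nat.coprime_comm.mp (hp.coprime_iff_not_dvd.mpr hv)).pow_right _
    have hvu : IsUnit ((v : ℕ) : ZMod N) := ⟨ZMod.unitOfCoprime v hco, ZMod.coe_unitOfCoprime v hco⟩
    have hjk : j ≤ k := by
      have h1 : p ^ j ≤ d.val := by
        rw [hval]
        exact Nat.le_mul_of_pos_right _ (Nat.pos_of_ne_zero hv0)
      have h2 : d.val < p ^ (k + 1) := ZMod.val_lt d
      have h3 : p ^ j < p ^ (k + 1) := lt_of_le_of_lt h1 h2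
      have h4 := (Nat.pow_lt_pow_iff_right hp.one_lt).mp h3
      omega
    have hsplit : (p : A) ^ j * ψ ((v : ℕ) : ZMod N) = 0 := by
      have h1 : ψ d = (p : A) ^ j * ψ ((v : ℕ) : ZMod N) := by
        rw [hd_eq, map_mul, map_pow, map_natCast]
      rw [← h1, hd]
    have hψv : IsUnit (ψ ((v : ℕ) : ZMod N)) := hvu.map ψ
    have hpj : (p : A) ^ j = 0 := (IsUnit.mul_left_eq_zero hψv).mp hsplit
    apply hpk
    calc (p : A) ^ k = (p : A) ^ j * (p : A) ^ (k - j) := by rw [← pow_add]; congr 1; omega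
    _ = 0 := by rw [hpj, zero_mul]
  have hψinj : Function.Injective ψ := by
    intro a b hab
    have h1 := hψ0 (a - b) (by rw [map_sub, hab, sub_self])
    exact sub_eq_zero.mp h1
  -- assemble
  refine ⟨F, A, inferInstance, iFt, inferInstance, inferInstance,
    { e := e, he := he, hcard := by rw [hcard]; omega, zu := zu, hgen := hgen,
      x := xA, pi := πl,
      hpix := by rw [hxA, hπl, hπx],
      hxe := hxe, hker := hkerA, hp0 := hp0A, hunit := hunitA }, ψ, hψinj, rfl⟩

/-! ### The final theorem -/

/-- The symmetry congruence:
`(-1)^(ps) ∑_b binom(s p^k, b(q-1)-r) ≡ (-1)^(pr) ∑_b binom(r p^h, b(q-1)-s) (mod p^(k+1))`. -/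
theorem carlitz_symmetry (p f q h k r s : ℕ) (hp : p.Prime) (hf : 0 < f) (hq : q = p ^ f)
    (hhk : k ≤ h) (hfhk : f ∣ h + k) (hr : 0 < r) (hs : 0 < s) :
    ((-1 : ℤ) ^ (p * s) * ∑ c ∈ Finset.range (s * p ^ k + 1),
        if ((q : ℤ) - 1) ∣ ((c : ℤ) + r) then ((s * p ^ k).choose c : ℤ) else 0)
      ≡ ((-1 : ℤ) ^ (p * r) * ∑ c ∈ Finset.range (r * p ^ h + 1),
        if ((q : ℤ) - 1) ∣ ((c : ℤ) + s) then ((r * p ^ h).choose c : ℤ) else 0)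
      [ZMOD (p : ℤ) ^ (k + 1)] := by
  subst hq
  have hq2 : 2 ≤ p ^ f := le_trans hp.two_le (Nat.le_self_pow hf.ne' p)
  have hsum : ∀ n a : ℕ, (∑ c ∈ Finset.range (n + 1),
      if ((p ^ f : ℕ) : ℤ) - 1 ∣ ((c : ℤ) + a) then (n.choose c : ℤ) else 0)
      = ((carlT (p ^ f - 1) n a : ℕ) : ℤ) := by
    intro n a
    unfold carlT
    push_cast
    apply Finset.sum_congr rfl
    intro c _
    have hiff : (((p : ℤ) ^ f - 1 ∣ ((c : ℤ) + a))) ↔ ((p ^ f - 1 : ℕ) ∣ (a + c)) := by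
      have h1 : (p : ℤ) ^ f - 1 = (((p ^ f - 1 : ℕ) : ℕ) : ℤ) := by
        rw [Nat.cast_sub (by omega : 1 ≤ p ^ f)]
        push_cast
        ring
      rw [h1, show ((c : ℤ) + a) = ((a + c : ℕ) : ℤ) by push_cast; ring]
      exact Int.natCast_dvd_natCast
    exact if_congr hiff rfl rfl
  rw [hsum, hsum]
  obtain ⟨F, A, iF, iFt, iCh, iA, S, ψ, hψinj, hSe⟩ := carlitz_exists p f k hp hf
  letI := iF; letI := iFt; letI := iCh; letI := iA
  have hmod : ((p : ℤ) ^ (k + 1)) = ((p ^ (k + 1) : ℕ) : ℤ) := by push_cast; ring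
  rw [hmod, ← ZMod.intCast_eq_intCast_iff]
  push_cast
  -- cancel the unit (p^f - 1)
  have hpe : ¬ (p ∣ (p ^ f - 1)) := by
    intro hpd
    have h1 : p ∣ p ^ f := dvd_pow_self p hf.ne'
    have h2 : p ∣ 1 := by
      have h3 := Nat.dvd_sub h1 hpd
      rwa [show p ^ f - (p ^ f - 1) = 1 by omega] at h3
    exact hp.one_lt.ne' (Nat.dvd_one.mp h2)
  have hcop : Nat.Coprime (p ^ f - 1) (p ^ (k + 1)) :=
    (Nat.coprime_comm.mp (hp.coprime_iff_not_dvd.mpr hpe)).pow_right _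
  have hunit : IsUnit (((p ^ f - 1 : ℕ) : ℕ) : ZMod (p ^ (k + 1))) :=
    ⟨ZMod.unitOfCoprime _ hcop, ZMod.coe_unitOfCoprime _ hcop⟩
  apply hunit.mul_left_cancel
  apply hψinj
  simp only [map_mul, map_pow, map_neg, map_one, map_natCast]
  have hmain := CarlitzSetup.main hp hf S h r s hhk hfhk hr hs
  rw [hSe] at hmain
  exact hmain
end

section
/- Let q be a power of a prime p, let k >= 0, suppose (q-1)*p^k divides the positive integer a, and suppose q-1 does not divide the integer r. Then (q-1) * (sum over integers b of binomial(a, b*(q-1)-r)) is congruent to -(-1)^(p*r) modulo p^(k+1). -/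
set_option linter.unusedSectionVars false
set_option maxHeartbeats 1000000

namespace CarlitzAux

open Finsupp AddMonoidAlgebra

section Freshman

variable {R : Type*} [CommRing R]

lemma freshman {p : ℕ} (hp : p.Prime) (y : R) :
    (p : R) ∣ (y + 1) ^ p - (y ^ p + 1) := by
  obtain ⟨n, hn⟩ : ∃ n, p = n + 1 := ⟨p - 1, by have := hp.pos; omega⟩
  subst hn
  rw [add_pow, Finset.sum_range_succ, Finset.sum_range_succ']
  simp only [one_pow, mul_one, Nat.choose_self, Nat.choose_zero_right, Nat.cast_one, pow_zero,
    one_mul]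
  have h : (∑ i ∈ Finset.range n, y ^ (i + 1) * ((n+1).choose (i+1) : R)) + 1 + y ^ (n+1)
      - (y ^ (n+1) + 1) = ∑ i ∈ Finset.range n, y ^ (i + 1) * ((n+1).choose (i+1) : R) := by
    ring
  rw [h]
  apply Finset.dvd_sum
  intro i hi
  have hi' := Finset.mem_range.mp hi
  exact Dvd.dvd.mul_left
    (Nat.cast_dvd_cast (hp.dvd_choose_self (by omega) (by omega))) _

lemma freshman_iter {p : ℕ} (hp : p.Prime) (y : R) (f : ℕ) :
    (p : R) ∣ (y + 1) ^ (p ^ f) - (y ^ (p ^ f) + 1) := by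
  induction f with
  | zero => simp
  | succ f ih =>
    have h1 : (p : R) ∣ ((y + 1) ^ (p ^ f)) ^ p - (y ^ (p ^ f) + 1) ^ p :=
      ih.trans (sub_dvd_pow_sub_pow _ _ p)
    have h2 : (p : R) ∣ (y ^ (p ^ f) + 1) ^ p - ((y ^ (p ^ f)) ^ p + 1) := freshman hp _
    have h3 := dvd_add h1 h2
    rw [pow_succ, pow_mul, pow_mul]
    convert h3 using 1
    ring

lemma neg_one_pow_eq_of_even_add {s t : ℕ} (h : Even (s + t)) : (-1 : ℤ) ^ s = (-1) ^ t := by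
  have h2 : (-1 : ℤ) ^ (s + t) = 1 := Even.neg_one_pow h
  have ht2 : (-1 : ℤ) ^ t * (-1) ^ t = 1 := by
    rw [← pow_add]
    exact Even.neg_one_pow ⟨t, rfl⟩
  calc (-1 : ℤ) ^ s = ((-1) ^ s * (-1) ^ t) * (-1) ^ t := by rw [mul_assoc, ht2, mul_one]
    _ = (-1) ^ (s + t) * (-1) ^ t := by rw [pow_add]
    _ = (-1) ^ t := by rw [h2, one_mul]

end Freshman

variable {m p f : ℕ} [NeZero m]

local notation "B" => AddMonoidAlgebra ℤ (ZMod m)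

/-- coefficientwise divisibility, forward -/
lemma coeff_dvd_of_dvd (n : ℤ) (y : B) (h : (n : B) ∣ y) (j : ZMod m) : n ∣ y.coeff j := by
  obtain ⟨z, rfl⟩ := h
  rw [← zsmul_eq_mul, AddMonoidAlgebra.coeff_smul, Finsupp.smul_apply]
  exact ⟨z.coeff j, rfl⟩

lemma dvd_of_coeff_dvd (n : ℤ) (y : B) (h : ∀ j, n ∣ y.coeff j) : (n : B) ∣ y := by
  rcases eq_or_ne n 0 with rfl | hn
  · have : y = 0 := by
      ext j
      simpa using h j
    simp [this]
  · refine ⟨AddMonoidAlgebra.ofCoeff (y.coeff.mapRange (fun t => t / n) (by simp)), ?_⟩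
    rw [← zsmul_eq_mul]
    ext j
    rw [AddMonoidAlgebra.coeff_smul, Finsupp.smul_apply, AddMonoidAlgebra.coeff_ofCoeff,
      Finsupp.mapRange_apply, smul_eq_mul]
    exact (Int.mul_ediv_cancel' (h j)).symm

lemma natCast_mul_apply (y : B) (j : ZMod m) : (((m : ℕ) : B) * y).coeff j = (m : ℤ) * y.coeff j := by
  rw [← nsmul_eq_mul, AddMonoidAlgebra.coeff_smul, Finsupp.smul_apply, nsmul_eq_mul]

/-- the alternating-sign "all ones" element -/
noncomputable def Wz (p m : ℕ) [NeZero m] : AddMonoidAlgebra ℤ (ZMod m) :=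
  ∑ j : ZMod m, AddMonoidAlgebra.single j (((-1 : ℤ) ^ p) ^ (j.val))

lemma zeta_pow_m (hp : p.Prime) (hm : m + 1 = p ^ f) : ((-1 : ℤ) ^ p) ^ m = 1 := by
  rcases hp.eq_two_or_odd' with rfl | hodd
  · norm_num
  · rw [hodd.neg_one_pow]
    have hodd' : Odd (m + 1) := hm ▸ hodd.pow
    have hme : Even m := by
      rcases Nat.even_or_odd m with h | h
      · exact h
      · exact absurd h.add_one (by simpa using hodd')
    exact hme.neg_one_pow

lemma even_m (hp : p.Prime) (hm : m + 1 = p ^ f) (hodd : Odd p) : Even m := by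
  have hodd' : Odd (m + 1) := hm ▸ hodd.pow
  rcases Nat.even_or_odd m with h | h
  · exact h
  · exact absurd h.add_one (by simpa using hodd')

lemma zeta_pow_mod (hp : p.Prime) (hm : m + 1 = p ^ f) (s : ℕ) :
    ((-1 : ℤ) ^ p) ^ (s % m) = ((-1 : ℤ) ^ p) ^ s := by
  conv_rhs => rw [← Nat.mod_add_div s m, pow_add, pow_mul, zeta_pow_m hp hm, one_pow, mul_one]

lemma Wz_apply (j : ZMod m) : (Wz p m).coeff j = ((-1 : ℤ) ^ p) ^ (j.val) := by
  rw [Wz, AddMonoidAlgebra.coeff_sum, Finsupp.finset_sum_apply, Finset.sum_eq_single j]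
  · rw [AddMonoidAlgebra.coeff_single, Finsupp.single_apply, if_pos rfl]
  · intro l _ hl
    rw [AddMonoidAlgebra.coeff_single, Finsupp.single_apply, if_neg hl]
  · intro h
    exact absurd (Finset.mem_univ j) h

lemma Wz_mul_Wz (hp : p.Prime) (hm : m + 1 = p ^ f) :
    (Wz p m) * (Wz p m) = (m : B) * (Wz p m) := by
  rw [Wz, Finset.sum_mul_sum]
  have key : ∀ j l : ZMod m,
      (AddMonoidAlgebra.single j (((-1:ℤ)^p)^(j.val)))
          * (AddMonoidAlgebra.single l (((-1:ℤ)^p)^(l.val)))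
        = AddMonoidAlgebra.single (j + l) (((-1:ℤ)^p)^((j+l).val)) := by
    intro j l
    rw [AddMonoidAlgebra.single_mul_single, ← pow_add, ZMod.val_add, zeta_pow_mod hp hm]
  calc (∑ j : ZMod m, ∑ l : ZMod m,
        (AddMonoidAlgebra.single j (((-1:ℤ)^p)^(j.val)))
          * (AddMonoidAlgebra.single l (((-1:ℤ)^p)^(l.val))))
      = ∑ j : ZMod m, ∑ l : ZMod m,
          AddMonoidAlgebra.single (j+l) (((-1:ℤ)^p)^((j+l).val)) := by
        refine Finset.sum_congr rfl fun j _ => Finset.sum_congr rfl fun l _ => key j l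
    _ = ∑ _j : ZMod m, Wz p m := by
        refine Finset.sum_congr rfl fun j _ => ?_
        rw [Wz]
        exact Fintype.sum_equiv (Equiv.addLeft j) _ _ fun l => rfl
    _ = (m : B) * Wz p m := by
        rw [Finset.sum_const, Finset.card_univ, ZMod.card, nsmul_eq_mul]

lemma MW_pow (hp : p.Prime) (hm : m + 1 = p ^ f) (n : ℕ) :
    ((m : B) - Wz p m) ^ (n + 1) = (m : B) ^ (n + 1) - (m : B) ^ n * Wz p m := by
  induction n with
  | zero => simp
  | succ n ih =>
    rw [pow_succ, ih]
    have hWW := Wz_mul_Wz (m := m) hp hm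
    ring_nf
    ring_nf at hWW
    linear_combination ((m : B)) ^ n * hWW

lemma choose_modeq (hp : p.Prime) (hm : m + 1 = p ^ f) :
    ∀ t, t ≤ m → ((m.choose t : ℤ)) ≡ (-1) ^ t [ZMOD (p : ℤ)] := by
  intro t
  induction t with
  | zero => simp
  | succ t ih =>
    intro h
    have ih' := ih (le_trans (Nat.le_succ t) h)
    have hpas : (m + 1).choose (t + 1) = m.choose t + m.choose (t + 1) :=
      Nat.choose_succ_succ _ _
    have hdvd : (p : ℤ) ∣ ((m + 1).choose (t + 1) : ℤ) := by
      refine Int.natCast_dvd_natCast.mpr ?_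
      rw [hm]
      exact hp.dvd_choose_pow (by omega) (by omega)
    have heq : (m.choose (t + 1) : ℤ) = ((m + 1).choose (t + 1) : ℤ) - m.choose t := by
      rw [hpas]; push_cast; ring
    rw [heq]
    have h0 : ((m + 1).choose (t + 1) : ℤ) ≡ 0 [ZMOD (p : ℤ)] :=
      Int.modEq_zero_iff_dvd.mpr hdvd
    have hsub := h0.sub ih'
    have h1 : (0 : ℤ) - (-1) ^ t = (-1) ^ (t + 1) := by ring
    rwa [h1] at hsub

lemma u_pow (a : ℕ) :
    ((AddMonoidAlgebra.single (1 : ZMod m) (1 : ℤ)) + 1) ^ a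
      = ∑ c ∈ Finset.range (a + 1), AddMonoidAlgebra.single (c : ZMod m) (a.choose c : ℤ) := by
  rw [add_pow]
  refine Finset.sum_congr rfl fun c _ => ?_
  rw [AddMonoidAlgebra.single_pow, one_pow, one_pow, mul_one, AddMonoidAlgebra.natCast_def,
    AddMonoidAlgebra.single_mul_single, add_zero, one_mul, nsmul_eq_mul, mul_one]

lemma u_pow_apply (a : ℕ) (j : ZMod m) :
    (((AddMonoidAlgebra.single (1 : ZMod m) (1 : ℤ)) + 1) ^ a).coeff j
      = ∑ c ∈ Finset.range (a + 1), if (c : ZMod m) = j then (a.choose c : ℤ) else 0 := by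
  rw [u_pow, AddMonoidAlgebra.coeff_sum, Finsupp.finset_sum_apply]
  exact Finset.sum_congr rfl fun c _ => Finsupp.single_apply

lemma u_m_apply (j : ZMod m) :
    (((AddMonoidAlgebra.single (1 : ZMod m) (1 : ℤ)) + 1) ^ m).coeff j
      = (m.choose j.val : ℤ) + (if 0 = j then 1 else 0) := by
  rw [u_pow_apply, Finset.sum_range_succ, ZMod.natCast_self, Nat.choose_self]
  congr 1
  have hterm : ∀ c ∈ Finset.range m,
      (if (c : ZMod m) = j then (m.choose c : ℤ) else 0)
        = if c = j.val then (m.choose c : ℤ) else 0 := by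
    intro c hc
    have hc' := Finset.mem_range.mp hc
    refine if_congr ?_ rfl rfl
    constructor
    · intro h
      rw [← h, ZMod.val_cast_of_lt hc']
    · intro h
      rw [h, ZMod.natCast_val, ZMod.cast_id]
  rw [Finset.sum_congr rfl hterm, Finset.sum_ite_eq' (Finset.range m) j.val,
    if_pos (Finset.mem_range.mpr (ZMod.val_lt j))]

lemma u_q (hp : p.Prime) (hm : m + 1 = p ^ f) :
    ((p : ℕ) : B) ∣ ((AddMonoidAlgebra.single (1 : ZMod m) (1 : ℤ)) + 1) ^ (m + 1)
      - ((AddMonoidAlgebra.single (1 : ZMod m) (1 : ℤ)) + 1) := by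
  have h := freshman_iter hp (AddMonoidAlgebra.single (1 : ZMod m) (1 : ℤ)) f
  rw [← hm] at h
  have hX : (AddMonoidAlgebra.single (1 : ZMod m) (1 : ℤ)) ^ (m + 1)
      = AddMonoidAlgebra.single (1 : ZMod m) (1 : ℤ) := by
    rw [AddMonoidAlgebra.single_pow, one_pow, nsmul_eq_mul, mul_one]
    norm_cast
    rw [Nat.cast_add, ZMod.natCast_self, Nat.cast_one, zero_add]
  rwa [hX] at h

lemma u_pow_mul (hp : p.Prime) (hm : m + 1 = p ^ f) :
    ∀ s, 0 < s → ((p : ℕ) : B) ∣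
      ((AddMonoidAlgebra.single (1 : ZMod m) (1 : ℤ)) + 1) ^ (m * s)
        - ((AddMonoidAlgebra.single (1 : ZMod m) (1 : ℤ)) + 1) ^ m := by
  set u : B := (AddMonoidAlgebra.single (1 : ZMod m) (1 : ℤ)) + 1 with hu
  intro s hs
  induction s with
  | zero => omega
  | succ s ih =>
    rcases Nat.eq_zero_or_pos s with rfl | hs'
    · simp
    · have hmpos : 0 < m := Nat.pos_of_ne_zero (NeZero.ne m)
      obtain ⟨t, ht⟩ : ∃ t, m * s = t + 1 := ⟨m * s - 1, by have := Nat.mul_pos hmpos hs'; omega⟩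
      have h1 : m * (s + 1) = t + (m + 1) := by rw [Nat.mul_succ, ht]; omega
      have heq : u ^ (m * (s+1)) - u ^ m
          = u ^ t * (u ^ (m+1) - u) + (u ^ (t+1) - u ^ m) := by
        rw [h1, pow_add, mul_sub, ← pow_succ]
        ring
      rw [heq]
      exact dvd_add (Dvd.dvd.mul_left (u_q hp hm) _) (ht ▸ ih hs')

lemma base_dvd (hp : p.Prime) (hm : m + 1 = p ^ f) :
    (((p : ℤ)) : B) ∣ ((m : ℕ) : B)
        * ((AddMonoidAlgebra.single (1 : ZMod m) (1 : ℤ)) + 1) ^ m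
      - (((m : ℕ) : B) - Wz p m) := by
  have hf0 : f ≠ 0 := by
    rintro rfl
    simp at hm
    exact absurd hm (NeZero.ne m)
  apply dvd_of_coeff_dvd
  intro j
  rw [AddMonoidAlgebra.coeff_sub, AddMonoidAlgebra.coeff_sub, Finsupp.sub_apply, Finsupp.sub_apply, natCast_mul_apply, u_m_apply, Wz_apply]
  have hmj : (((m : ℕ) : B)).coeff j = if (0 : ZMod m) = j then (m : ℤ) else 0 := by
    rw [AddMonoidAlgebra.natCast_def, AddMonoidAlgebra.coeff_single, Finsupp.single_apply]
  rw [hmj]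
  set e : ℤ := if (0 : ZMod m) = j then 1 else 0 with he
  have hme : (if (0 : ZMod m) = j then (m : ℤ) else 0) = (m : ℤ) * e := by
    by_cases h : (0 : ZMod m) = j <;> simp [he, h]
  rw [hme]
  have h2 : (m : ℤ) ≡ -1 [ZMOD (p : ℤ)] := by
    rw [Int.modEq_iff_dvd]
    have : (-1 : ℤ) - (m : ℤ) = -((m : ℤ) + 1) := by ring
    rw [this]
    refine dvd_neg.mpr ?_
    have : ((m : ℤ) + 1) = ((p : ℤ)) ^ f := by exact_mod_cast congrArg (Nat.cast : ℕ → ℤ) hm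
    rw [this]
    exact dvd_pow_self _ hf0
  have h1 : ((m.choose j.val : ℤ)) ≡ (-1) ^ j.val [ZMOD (p : ℤ)] :=
    choose_modeq hp hm j.val (le_of_lt (ZMod.val_lt j))
  have h3 : ((-1 : ℤ) ^ p) ≡ -1 [ZMOD (p : ℤ)] := by
    rcases hp.eq_two_or_odd' with rfl | hodd
    · decide
    · rw [hodd.neg_one_pow]
  have key : (m : ℤ) * ((m.choose j.val : ℤ) + e) - ((m : ℤ) * e - ((-1:ℤ)^p) ^ j.val)
      ≡ (-1) * ((-1) ^ j.val + e) - ((-1) * e - (-1) ^ j.val) [ZMOD (p : ℤ)] :=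
    (h2.mul (h1.add Int.ModEq.rfl)).sub ((h2.mul Int.ModEq.rfl).sub (h3.pow j.val))
  have hz : (-1 : ℤ) * ((-1) ^ j.val + e) - ((-1) * e - (-1) ^ j.val) = 0 := by ring
  rw [hz] at key
  exact Int.modEq_zero_iff_dvd.mp key

lemma main_coeff (hp : p.Prime) (hm : m + 1 = p ^ f) (k a : ℕ) (ha : 0 < a)
    (hka : m * p ^ k ∣ a) (j : ZMod m) :
    (p : ℤ) ^ (k + 1) ∣ ((((m : ℕ) : B)
        * ((AddMonoidAlgebra.single (1 : ZMod m) (1 : ℤ)) + 1) ^ a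
      - (((m : ℕ) : B) - Wz p m)).coeff j) := by
  set u : B := (AddMonoidAlgebra.single (1 : ZMod m) (1 : ℤ)) + 1 with hu
  set M : B := ((m : ℕ) : B) with hM
  obtain ⟨t, ht⟩ := hka
  have hmpos : 0 < m := Nat.pos_of_ne_zero (NeZero.ne m)
  have htpos : 0 < t := by
    rcases Nat.eq_zero_or_pos t with rfl | h
    · rw [Nat.mul_zero] at ht; omega
    · exact h
  -- step 1 : base congruence for exponent m * t
  have hb : ((p : ℕ) : B) ∣ M * u ^ (m * t) - (M - Wz p m) := by
    have hsplit : M * u ^ (m * t) - (M - Wz p m)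
        = M * (u ^ (m * t) - u ^ m) + (M * u ^ m - (M - Wz p m)) := by ring
    rw [hsplit]
    refine dvd_add (Dvd.dvd.mul_left (u_pow_mul hp hm t htpos) _) ?_
    have := base_dvd (f := f) hp hm
    rwa [Int.cast_natCast] at this
  -- step 2 : raise to the p^k power
  have hpow := dvd_sub_pow_of_dvd_sub hb k
  obtain ⟨n, hn⟩ : ∃ n, p ^ k = n + 1 := ⟨p ^ k - 1, by have := Nat.pow_pos (n := k) hp.pos; omega⟩
  have hA : (M * u ^ (m * t)) ^ (p ^ k) = M ^ (p ^ k) * u ^ a := by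
    rw [mul_pow, ← pow_mul]
    congr 2
    rw [ht]; ring
  have hB : (M - Wz p m) ^ (p ^ k) = M ^ (p ^ k) - M ^ n * Wz p m := by
    rw [hn]
    exact MW_pow hp hm n
  rw [hA, hB] at hpow
  have hfac : M ^ (p ^ k) * u ^ a - (M ^ (p ^ k) - M ^ n * Wz p m)
      = M ^ n * (M * u ^ a - (M - Wz p m)) := by
    rw [hn]
    ring
  rw [hfac] at hpow
  -- step 3 : extract the coefficient and cancel m ^ n
  have hcast : (((p : ℤ) ^ (k + 1) : ℤ) : B) = ((p : ℕ) : B) ^ (k + 1) := by push_cast; ring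
  have hcoeff : (p : ℤ) ^ (k + 1) ∣ ((M ^ n * (M * u ^ a - (M - Wz p m))).coeff j) :=
    coeff_dvd_of_dvd ((p : ℤ) ^ (k + 1)) (M ^ n * (M * u ^ a - (M - Wz p m)))
      (hcast ▸ hpow) j
  have hMn : (M ^ n * (M * u ^ a - (M - Wz p m))).coeff j
      = ((m ^ n : ℕ) : ℤ) * ((M * u ^ a - (M - Wz p m)).coeff j) := by
    have : M ^ n = (((m ^ n : ℕ)) : B) := by rw [hM]; push_cast; ring
    rw [this]
    have := natCast_mul_apply (m := m) (M * u ^ a - (M - Wz p m)) j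
    -- natCast_mul_apply is stated for m; need for m ^ n; redo inline:
    rw [← nsmul_eq_mul, AddMonoidAlgebra.coeff_smul, Finsupp.smul_apply, nsmul_eq_mul]
  rw [hMn] at hcoeff
  -- coprimality
  have hf0 : f ≠ 0 := by
    rintro rfl
    simp at hm
    exact absurd hm (NeZero.ne m)
  have hpm : ¬ (p ∣ m) := by
    intro hdvd
    have : p ∣ m + 1 := hm ▸ dvd_pow_self p hf0
    have h2 := Nat.dvd_sub this hdvd
    simp at h2
    have := hp.two_le
    omega
  have hcop : IsCoprime ((p : ℤ) ^ (k + 1)) (((m ^ n : ℕ)) : ℤ) := by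
    have hc : Nat.Coprime p m := (Nat.Prime.coprime_iff_not_dvd hp).mpr hpm
    have : IsCoprime ((p : ℤ)) ((m : ℤ)) := by
      rw [Int.isCoprime_iff_gcd_eq_one]
      exact_mod_cast hc
    push_cast
    exact this.pow
  exact hcop.dvd_of_dvd_mul_left hcoeff

end CarlitzAux

/-- If `(q-1) p^k ∣ a` and `q-1 ∤ r`, then
`(q-1) ∑_b binom(a, b(q-1)-r) ≡ -(-1)^(pr) (mod p^(k+1))`. -/
theorem carlitz_cor (p f q k a : ℕ) (r : ℤ) (hp : p.Prime) (hf : 0 < f) (hq : q = p ^ f)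
    (ha : 0 < a) (hka : (q - 1) * p ^ k ∣ a) (hr : ¬ ((q : ℤ) - 1) ∣ r) :
    (((q : ℤ) - 1) * ∑ c ∈ Finset.range (a + 1),
        if ((q : ℤ) - 1) ∣ ((c : ℤ) + r) then (a.choose c : ℤ) else 0)
      ≡ -(-1 : ℤ) ^ ((p : ℤ) * r).natAbs [ZMOD (p : ℤ) ^ (k + 1)] := by
  obtain ⟨m, hm⟩ : ∃ m, m + 1 = p ^ f :=
    ⟨p ^ f - 1, by have := Nat.pow_pos (n := f) hp.pos; omega⟩
  have hpf2 : 2 ≤ p ^ f := by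
    calc 2 ≤ p := hp.two_le
    _ = p ^ 1 := (pow_one p).symm
    _ ≤ p ^ f := Nat.pow_le_pow_right hp.pos hf
  haveI : NeZero m := ⟨by omega⟩
  have hq' : q = m + 1 := by rw [hq, ← hm]
  have hqz : (q : ℤ) - 1 = (m : ℤ) := by rw [hq']; push_cast; ring
  have hka' : m * p ^ k ∣ a := by rwa [show q - 1 = m by omega] at hka
  set j₀ : ZMod m := ((-r : ℤ) : ZMod m) with hj₀def
  have hj : j₀ = -((r : ℤ) : ZMod m) := by rw [hj₀def]; push_cast; ring
  have hj₀ : (0 : ZMod m) ≠ j₀ := by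
    intro h
    apply hr
    rw [hqz]
    have h0 : ((-r : ℤ) : ZMod m) = 0 := h.symm
    exact (dvd_neg).mp ((ZMod.intCast_zmod_eq_zero_iff_dvd (-r) m).mp h0)
  have hmain := CarlitzAux.main_coeff hp hm k a ha hka' j₀
  rw [AddMonoidAlgebra.coeff_sub, AddMonoidAlgebra.coeff_sub, Finsupp.sub_apply, Finsupp.sub_apply, CarlitzAux.natCast_mul_apply,
    CarlitzAux.Wz_apply] at hmain
  have hM0 : ((((m : ℕ)) : AddMonoidAlgebra ℤ (ZMod m))).coeff j₀ = 0 := by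
    rw [AddMonoidAlgebra.natCast_def, AddMonoidAlgebra.coeff_single, Finsupp.single_apply, if_neg hj₀]
  rw [hM0] at hmain
  have hS : (∑ c ∈ Finset.range (a + 1),
        if ((q : ℤ) - 1) ∣ ((c : ℤ) + r) then (a.choose c : ℤ) else 0)
      = (((AddMonoidAlgebra.single (1 : ZMod m) (1 : ℤ)) + 1) ^ a).coeff j₀ := by
    rw [CarlitzAux.u_pow_apply]
    refine Finset.sum_congr rfl fun c _ => ?_
    refine (if_congr ?_ rfl rfl).symm
    rw [hqz, ← ZMod.intCast_zmod_eq_zero_iff_dvd]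
    push_cast
    rw [hj]
    exact eq_neg_iff_add_eq_zero
  have hdvd2 : (m : ℤ) ∣ ((j₀.val : ℤ) + r) := by
    rw [← ZMod.intCast_zmod_eq_zero_iff_dvd]
    push_cast
    rw [ZMod.natCast_val, ZMod.cast_id, hj]
    ring
  obtain ⟨z, hz⟩ := hdvd2
  have hevenpm : Even ((p : ℤ) * m) := by
    rcases hp.eq_two_or_odd' with rfl | hodd
    · exact ⟨(m : ℤ), by push_cast; ring⟩
    · have hme : Even m := CarlitzAux.even_m hp hm hodd
      exact ((Int.even_coe_nat m).mpr hme).mul_left _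
  have heven2 : Even ((p : ℤ) * (j₀.val) + (p : ℤ) * r) := by
    have hrw : (p : ℤ) * (j₀.val) + (p : ℤ) * r = ((p : ℤ) * m) * z := by
      rw [← mul_add, hz]; ring
    rw [hrw]
    exact hevenpm.mul_right z
  have hparity : (-1 : ℤ) ^ ((p : ℤ) * r).natAbs = (-1 : ℤ) ^ (p * j₀.val) := by
    apply CarlitzAux.neg_one_pow_eq_of_even_add
    rw [Nat.even_add]
    have e1 : Even (((p : ℤ) * r).natAbs) ↔ Even ((p : ℤ) * r) := Int.natAbs_even
    have e2 : Even (p * j₀.val) ↔ Even ((p : ℤ) * (j₀.val)) := by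
      rw [← Int.even_coe_nat]
      push_cast
      rfl
    have e3 := Int.even_add.mp heven2
    tauto
  have hζ : ((-1 : ℤ) ^ p) ^ j₀.val = (-1 : ℤ) ^ (p * j₀.val) := by rw [pow_mul]
  rw [Int.modEq_iff_dvd, hS, hqz]
  have hfin : -(-1 : ℤ) ^ ((p : ℤ) * r).natAbs
        - (m : ℤ) * ((((AddMonoidAlgebra.single (1 : ZMod m) (1 : ℤ)) + 1) ^ a).coeff j₀)
      = -((m : ℤ) * ((((AddMonoidAlgebra.single (1 : ZMod m) (1 : ℤ)) + 1) ^ a).coeff j₀)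
        - (0 - ((-1 : ℤ) ^ p) ^ j₀.val)) := by
    rw [hζ, hparity]; ring
  rw [hfin]
  exact dvd_neg.mpr hmain
end

section
/- For all nonnegative integers k <= h with h+k even and positive integers r, s: (-1)^s * 2^(s*3^k - 1) ≡ (-1)^r * 2^(r*3^h - 1) modulo 3^(k+1). -/
/-!
Lifting the exponent at `3` gives `3 ^ (k + 1) ∣ 2 ^ 3 ^ k + 1`, so `2 ^ 3 ^ h ≡ -1` modulo
`3 ^ (k + 1)` for every `h ≥ k`. Then twice either side is `(-2 ^ 3 ^ h) ^ r ≡ 1`, so both sides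
are the inverse of `2` modulo `3 ^ (k + 1)`.
-/

theorem three_pow_succ_dvd_two_pow_three_pow_add_one (k : ℕ) : 3 ^ (k + 1) ∣ 2 ^ 3 ^ k + 1 := by
  have : Fact (Nat.Prime 3) := ⟨Nat.prime_three⟩
  have hval : padicValNat 3 (2 ^ 3 ^ k + 1 ^ 3 ^ k) = 1 + k := by
    rw [padicValNat.pow_add_pow (by decide) (by decide) (by decide) (Odd.pow (by decide)),
      padicValNat.self (by norm_num), padicValNat.prime_pow]
  rw [one_pow, add_comm 1 k] at hval
  exact hval ▸ pow_padicValNat_dvd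

theorem Int.two_pow_three_pow_modEq_neg_one (k : ℕ) :
    (2 : ℤ) ^ 3 ^ k ≡ -1 [ZMOD 3 ^ (k + 1)] := by
  refine (Int.modEq_iff_dvd.mpr ?_).symm
  rw [sub_neg_eq_add]
  exact_mod_cast three_pow_succ_dvd_two_pow_three_pow_add_one k

theorem Int.ModEq.cancel_left_of_isCoprime {m c a b : ℤ} (hc : IsCoprime m c)
    (h : c * a ≡ c * b [ZMOD m]) : a ≡ b [ZMOD m] := by
  rw [Int.modEq_iff_dvd, ← mul_sub] at *
  exact hc.dvd_of_dvd_mul_left h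

theorem two_mul_neg_one_pow_mul_two_pow_sub_one_modEq_one {m : ℤ} {e r : ℕ}
    (he : (2 : ℤ) ^ e ≡ -1 [ZMOD m]) (hre : r * e ≠ 0) :
    2 * ((-1) ^ r * 2 ^ (r * e - 1)) ≡ 1 [ZMOD m] :=
  calc 2 * ((-1) ^ r * 2 ^ (r * e - 1)) = (-2 ^ e) ^ r := by
        rw [mul_left_comm, mul_pow_sub_one hre, pow_mul', neg_pow (2 ^ e)]
    _ ≡ (- -1) ^ r [ZMOD m] := he.neg.pow r
    _ = 1 := by rw [neg_neg, one_pow]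

theorem symmetry_q_three_general (k h r s : ℕ) (hr : 0 < r) (hs : 0 < s) (hkh : k ≤ h) :
    ((-1 : ℤ) ^ s * 2 ^ (s * 3 ^ k - 1)) ≡ ((-1 : ℤ) ^ r * 2 ^ (r * 3 ^ h - 1))
      [ZMOD (3 : ℤ) ^ (k + 1)] := by
  have hcop : IsCoprime ((3 : ℤ) ^ (k + 1)) 2 :=
    (Int.isCoprime_iff_gcd_eq_one.mpr rfl).pow_left
  have h_two_pow : (2 : ℤ) ^ 3 ^ h ≡ -1 [ZMOD 3 ^ (k + 1)] :=
    (Int.two_pow_three_pow_modEq_neg_one h).of_dvd (pow_dvd_pow 3 (by omega))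
  have hs' := two_mul_neg_one_pow_mul_two_pow_sub_one_modEq_one
    (Int.two_pow_three_pow_modEq_neg_one k) (r := s) (by positivity)
  have hr' := two_mul_neg_one_pow_mul_two_pow_sub_one_modEq_one h_two_pow (r := r) (by positivity)
  exact Int.ModEq.cancel_left_of_isCoprime hcop (hs'.trans hr'.symm)

/-- The case `q = 3` of the symmetry congruence:
`(-1)^s 2^(s 3^k - 1) ≡ (-1)^r 2^(r 3^h - 1) (mod 3^(k+1))` for `k ≤ h`, `h + k` even. -/
theorem symmetry_q_three (k h r s : ℕ) (hr : 0 < r) (hs : 0 < s) (hkh : k ≤ h)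
    (heven : Even (h + k)) :
    ((-1 : ℤ) ^ s * 2 ^ (s * 3 ^ k - 1)) ≡ ((-1 : ℤ) ^ r * 2 ^ (r * 3 ^ h - 1))
      [ZMOD (3 : ℤ) ^ (k + 1)] :=
  symmetry_q_three_general k h r s hr hs hkh
end

section
/- Let p be an odd prime, q = p^f, and k >= 0. Let a and abar be positive integers, both multiples of p^k, with a ≡ abar modulo (q-1)*p^k, and let r be an integer. Then the sum over integers b of binomial(a, b*(q-1)+r) is congruent modulo p^(k+1) to the sum over integers b of binomial(abar, b*(q-1)+r). -/
open AddMonoidAlgebra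

noncomputable section GlaisherAux

lemma glaisher_modeq_neg_one_pow {m n : ℕ} (h : m ≡ n [MOD 2]) : (-1:ℤ)^m = (-1)^n := by
  unfold Nat.ModEq at h
  rcases Nat.even_or_odd m with hm | hm
  · have hn : Even n := Nat.even_iff.2 (by rw [← h]; exact Nat.even_iff.1 hm)
    rw [hm.neg_one_pow, hn.neg_one_pow]
  · have hn : Odd n := Nat.odd_iff.2 (by rw [← h]; exact Nat.odd_iff.1 hm)
    rw [hm.neg_one_pow, hn.neg_one_pow]

/-- `(a+b)^n = a^n + n a^(n-1) b + b^2 c` in a commutative ring. -/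
lemma glaisher_pow_add_sq {R : Type*} [CommRing R] (a b : R) :
    ∀ n : ℕ, 1 ≤ n → ∃ c : R, (a+b)^n = a^n + (n:R) * a^(n-1) * b + b^2 * c := by
  intro n
  induction n with
  | zero => intro h; omega
  | succ n ih =>
    intro _
    rcases Nat.eq_zero_or_pos n with hn | hn
    · subst hn; exact ⟨0, by ring⟩
    · obtain ⟨c, hc⟩ := ih hn
      refine ⟨(n:R) * a^(n-1) + (a+b)*c, ?_⟩
      have h1 : a ^ n = a ^ (n - 1) * a := by
        rw [← pow_succ]; congr 1; omega
      have : (a+b)^(n+1) = (a+b) * (a+b)^n := by ring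
      rw [this, hc]
      push_cast
      linear_combination (-(n:R) * b) * h1

/-- if `A^2 = c A` then `A^n = c^(n-1) A`. -/
lemma glaisher_pow_of_sq {R : Type*} [CommRing R] (A c : R) (h : A*A = c*A) :
    ∀ n : ℕ, 1 ≤ n → A^n = c^(n-1) * A := by
  intro n
  induction n with
  | zero => omega
  | succ n ih =>
    intro _
    rcases Nat.eq_zero_or_pos n with hn | hn
    · subst hn; simp
    · have h1 : A^(n+1) = A^n * A := by ring
      rw [h1, ih hn]
      have h2 : c ^ (n - 1) * A * A = c ^ (n-1) * (c * A) := by rw [mul_assoc, h]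
      rw [h2, Nat.add_sub_cancel, ← mul_assoc, ← pow_succ]
      congr 2
      omega

variable (M p : ℕ) [NeZero M] [Fact p.Prime]

abbrev BBi := AddMonoidAlgebra ℤ (ZMod M)
abbrev BBp := AddMonoidAlgebra (ZMod p) (ZMod M)

lemma glaisher_cast_dvd_iff (n : ℤ) (y : BBi M) :
    ((n : BBi M)) ∣ y ↔ ∀ g : ZMod M, n ∣ y.coeff g := by
  constructor
  · rintro ⟨e, rfl⟩ g
    rw [← zsmul_eq_mul]
    exact ⟨e.coeff g, rfl⟩
  · intro h
    refine ⟨AddMonoidAlgebra.ofCoeff (Finsupp.mapRange (· / n) (by simp) y.coeff), ?_⟩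
    rw [← zsmul_eq_mul]
    ext g
    have : (n • AddMonoidAlgebra.ofCoeff (Finsupp.mapRange (· / n) (by simp) y.coeff)).coeff g = n * (y.coeff g / n) := rfl
    rw [this, Int.mul_ediv_cancel' (h g)]

lemma glaisher_val_add_modeq (g h : ZMod M) : (g+h).val ≡ g.val + h.val [MOD M] := by
  rw [ZMod.val_add g h]; exact (Nat.mod_modEq _ M)

lemma glaisher_parity_val (hM : 2 ∣ M) (g h : ZMod M) :
    (-1:ℤ)^((g+h).val) = (-1)^(g.val + h.val) :=
  glaisher_modeq_neg_one_pow ((glaisher_val_add_modeq M g h).of_dvd hM)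

def NN : BBi M := ∑ g : ZMod M, single g ((-1:ℤ)^g.val)

def xx : BBi M := 1 + single 1 1

lemma glaisher_s_mul_N (hM : 2 ∣ M) (h1 : 1 < M) :
    (single 1 1 : BBi M) * NN M = - NN M := by
  haveI : Fact (1 < M) := ⟨h1⟩
  unfold NN
  rw [Finset.mul_sum, ← Finset.sum_neg_distrib]
  apply Fintype.sum_equiv (Equiv.addLeft (1 : ZMod M))
  intro g
  rw [single_mul_single, one_mul, ← AddMonoidAlgebra.single_neg]
  show AddMonoidAlgebra.single _ _ = AddMonoidAlgebra.single ((Equiv.addLeft 1) g) _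
  congr 1
  have : (-1:ℤ)^(((1:ZMod M)+g).val) = (-1)^((1:ZMod M).val + g.val) :=
    glaisher_parity_val M hM 1 g
  rw [Equiv.coe_addLeft, this, ZMod.val_one, pow_add]
  ring

lemma glaisher_x_mul_N (hM : 2 ∣ M) (h1 : 1 < M) : xx M * NN M = 0 := by
  unfold xx
  rw [add_mul, one_mul, glaisher_s_mul_N M hM h1, add_neg_cancel]

lemma glaisher_N_mul_N (hM : 2 ∣ M) : NN M * NN M = (M : ℤ) • NN M := by
  unfold NN
  rw [Finset.sum_mul]
  have key : ∀ g : ZMod M,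
      (single g ((-1:ℤ)^g.val)) * (∑ h : ZMod M, single h ((-1:ℤ)^h.val))
      = ∑ h : ZMod M, single h ((-1:ℤ)^h.val) := by
    intro g
    rw [Finset.mul_sum]
    apply Fintype.sum_equiv (Equiv.addLeft g)
    intro h
    rw [single_mul_single]
    show AddMonoidAlgebra.single _ _ = AddMonoidAlgebra.single ((Equiv.addLeft g) h) _
    congr 1
    rw [Equiv.coe_addLeft, glaisher_parity_val M hM g h, pow_add]
  calc (∑ g : ZMod M, single g ((-1:ℤ)^g.val) * ∑ h : ZMod M, single h ((-1:ℤ)^h.val))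
      = ∑ _g : ZMod M, ∑ h : ZMod M, single h ((-1:ℤ)^h.val) :=
        Finset.sum_congr rfl fun g _ => key g
    _ = (M : ℤ) • ∑ h : ZMod M, single h ((-1:ℤ)^h.val) := by
        rw [Finset.sum_const, Finset.card_univ, ZMod.card M]
        exact (natCast_zsmul _ _).symm

instance : CharP (BBp M p) p :=
  charP_of_injective_ringHom (R := ZMod p)
    (f := (singleZeroRingHom : ZMod p →+* BBp M p))
    (fun a b hab => Finsupp.single_injective (0 : ZMod M)
      (by simp [(by simpa [singleZeroRingHom] using hab : a = b)])) p

lemma glaisher_frob_pow (j : ℕ) :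
    ((1 + single 1 1 : BBp M p)) ^ (p ^ j) = 1 + single ((p^j : ℕ) : ZMod M) 1 := by
  induction j with
  | zero => simp
  | succ j ih =>
    rw [pow_succ, pow_mul, ih, add_pow_char, one_pow, single_pow, one_pow]
    congr 2
    push_cast
    rw [nsmul_eq_mul]
    ring

def phi : BBi M →+* BBp M p :=
  liftNCRingHom ((singleZeroRingHom : ZMod p →+* BBp M p).comp (Int.castRingHom (ZMod p)))
    (of (ZMod p) (ZMod M)) (fun _ _ => Commute.all _ _)

lemma glaisher_phi_single (g : ZMod M) (c : ℤ) :
    phi M p (single g c) = single g ((c : ZMod p)) := by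
  unfold phi
  rw [liftNCRingHom]
  show liftNC _ _ (single g c) = _
  rw [liftNC_single]
  show (singleZeroRingHom ((Int.castRingHom (ZMod p)) c))
      * (of (ZMod p) (ZMod M)) (Multiplicative.ofAdd g) = _
  rw [of_apply]
  show AddMonoidAlgebra.single 0 _ * AddMonoidAlgebra.single _ 1 = _
  rw [single_mul_single, zero_add, mul_one]
  rfl

lemma glaisher_phi_apply (y : BBi M) (g : ZMod M) :
    (phi M p y).coeff g = ((y.coeff g : ℤ) : ZMod p) := by
  induction y using AddMonoidAlgebra.induction_linear with
  | zero => simp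
  | add a b ha hb =>
    rw [map_add]
    show (phi M p a + phi M p b).coeff g = _
    rw [AddMonoidAlgebra.coeff_add, Finsupp.add_apply, ha, hb]
    show _ = ((a.coeff g + b.coeff g : ℤ) : ZMod p)
    push_cast
    ring
  | single a c =>
    rw [glaisher_phi_single]
    show Finsupp.single a ((c : ZMod p)) g = ((Finsupp.single a c : ZMod M →₀ ℤ) g : ZMod p)
    rw [Finsupp.single_apply, Finsupp.single_apply, apply_ite (Int.cast : ℤ → ZMod p)]
    simp

lemma glaisher_phi_zero_dvd (y : BBi M) (h : phi M p y = 0) : (((p:ℤ) : BBi M)) ∣ y := by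
  rw [glaisher_cast_dvd_iff]
  intro g
  have := glaisher_phi_apply M p y g
  rw [h] at this
  have : ((y.coeff g : ℤ) : ZMod p) = 0 := by rw [← this]; rfl
  exact (ZMod.intCast_zmod_eq_zero_iff_dvd _ p).1 this

end GlaisherAux
section Part2
open AddMonoidAlgebra
variable (M p : ℕ) [NeZero M] [Fact p.Prime]

lemma glaisher_base (hM2 : 2 ∣ M) (hM1 : 1 < M)
    (hX : (1 + single 1 1 : BBp M p)^(M+1) = 1 + single 1 1)
    (hMp : ((M:ℤ) : ZMod p) = -1) :
    phi M p ((M:ℤ) • ((xx M)^M - 1) + NN M) = 0 := by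
  have hMc : ((M:ℤ) : BBp M p) = -1 := by
    have := congrArg (singleZeroRingHom : ZMod p →+* BBp M p) hMp
    rw [map_intCast, map_neg, map_one] at this
    exact this
  have hphix : phi M p (xx M) = 1 + single 1 1 := by
    unfold xx
    rw [map_add, map_one, glaisher_phi_single, Int.cast_one]
  set X : BBp M p := 1 + single 1 1 with hXdef
  set Np : BBp M p := phi M p (NN M) with hNp
  have hxN : X * Np = 0 := by
    rw [hNp, ← hphix, ← map_mul, glaisher_x_mul_N M hM2 hM1, map_zero]
  have hNN : Np * Np = - Np := by
    have h2 := congrArg (phi M p) (glaisher_N_mul_N M hM2)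
    rw [map_mul, map_zsmul, zsmul_eq_mul, hMc] at h2
    rw [h2]; ring
  set g : BBp M p := 1 - X^M + Np with hg
  have hXg : X * g = 0 := by
    have h3 : X * g = X - X^(M+1) + X*Np := by rw [hg]; ring
    rw [h3, hX, hxN]; ring
  have hsg : (single 1 1 : BBp M p) * g = -g := by
    have hX1 : (single 1 1 : BBp M p) = X - 1 := by rw [hXdef]; ring
    rw [hX1, sub_mul, one_mul, hXg]; ring
  have hpow : ∀ v : ℕ, (single 1 1 : BBp M p)^v * g = ((-1 : ZMod p)^v) • g := by
    intro v
    induction v with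
    | zero => simp
    | succ v ih =>
      rw [pow_succ, mul_assoc, hsg, mul_neg, ih, ← neg_smul, pow_succ, mul_neg_one]
  have hsingleg : ∀ c : ZMod M, (single c 1 : BBp M p) * g = ((-1 : ZMod p)^c.val) • g := by
    intro c
    have h6 : (single c (1 : ZMod p) : BBp M p) = (single 1 1 : BBp M p)^c.val := by
      rw [single_pow, one_pow, nsmul_eq_mul, mul_one]
      congr 1
      simp [ZMod.natCast_val, ZMod.cast_id]
    rw [h6, hpow]
  have hNg : Np * g = - g := by
    have h7 : Np = ∑ h : ZMod M, single h (((-1:ℤ)^h.val : ℤ) : ZMod p) := by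
      rw [hNp]
      unfold NN
      rw [map_sum]
      exact Finset.sum_congr rfl fun h _ => glaisher_phi_single M p h _
    rw [h7, Finset.sum_mul]
    have h8 : ∀ h : ZMod M,
        (single h (((-1:ℤ)^h.val : ℤ) : ZMod p) : BBp M p) * g = g := by
      intro h
      have hc : (((-1:ℤ)^h.val : ℤ) : ZMod p) = (-1 : ZMod p)^h.val := by push_cast; ring
      have h9 : (single h (((-1:ℤ)^h.val : ℤ) : ZMod p) : BBp M p)
          = ((-1 : ZMod p)^h.val) • single h 1 := by
        rw [hc, AddMonoidAlgebra.smul_single']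
        rw [mul_one]
      rw [h9, smul_mul_assoc, hsingleg, smul_smul, ← mul_pow, neg_mul_neg, one_mul,
        one_pow, one_smul]
    rw [Finset.sum_congr rfl fun h _ => h8 h, Finset.sum_const, Finset.card_univ,
      ZMod.card M, nsmul_eq_mul]
    have h10 : ((M:ℕ) : BBp M p) = -1 := by
      rw [← Int.cast_natCast, hMc]
    rw [h10]; ring
  have hXM0 : Np * X^M = 0 := by
    have hNx : Np * X = 0 := by rw [mul_comm]; exact hxN
    have e : X^M = X^(M-1) * X := by rw [← pow_succ]; congr 1; omega
    rw [e]
    calc Np * (X^(M-1) * X) = X^(M-1) * (Np * X) := by ring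
      _ = 0 := by rw [hNx, mul_zero]
  have hNg0 : Np * g = 0 := by
    have h11 : Np * g = Np - Np * X^M + Np*Np := by rw [hg]; ring
    rw [h11, hXM0, hNN]; ring
  have hg0 : g = 0 := by
    have := hNg.symm.trans hNg0
    rwa [neg_eq_zero] at this
  rw [map_add, map_zsmul, map_sub, map_pow, map_one, hphix, zsmul_eq_mul, hMc]
  rw [hg] at hg0
  linear_combination hg0
end Part2
section Part3
open AddMonoidAlgebra
variable (M p : ℕ) [NeZero M] [Fact p.Prime]

lemma glaisher_coeff_mul (c : ℤ) (y : BBi M) (g : ZMod M) :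
    ((c : BBi M) * y).coeff g = c * y.coeff g := by
  rw [← zsmul_eq_mul]; rfl

lemma glaisher_claim (hM2 : 2 ∣ M) (hM1 : 1 < M)
    (hX : (1 + single 1 1 : BBp M p)^(M+1) = 1 + single 1 1)
    (hMp : ((M:ℤ) : ZMod p) = -1) (hcop : IsCoprime ((p:ℤ)) ((M:ℤ))) (hp1 : 1 ≤ p) :
    ∀ k : ℕ, ((((p:ℤ)^(k+1) : ℤ)) : BBi M) ∣ ((M:ℤ) • ((xx M)^(M * p^k) - 1) + NN M) := by
  intro k
  induction k with
  | zero =>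
    have h0 := glaisher_phi_zero_dvd M p _ (glaisher_base M p hM2 hM1 hX hMp)
    simpa using h0
  | succ k ih =>
    obtain ⟨h, hh⟩ := ih
    set z : BBi M := (xx M)^(M * p^k) - 1 with hz
    set Qc : BBi M := ((M:ℤ) : BBi M) with hQc
    set Pc : BBi M := (((p:ℤ)^(k+1) : ℤ) : BBi M) with hPc
    have hQz : Qc * z = - NN M + Pc * h := by
      have : (M:ℤ) • z = Qc * z := zsmul_eq_mul _ _
      linear_combination hh - this
    have hN2 : NN M * NN M = Qc * NN M := by
      have := glaisher_N_mul_N M hM2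
      rw [zsmul_eq_mul] at this
      exact this
    have hAmN : (Qc - NN M) * (Qc - NN M) = Qc * (Qc - NN M) := by
      linear_combination hN2
    have hA : Qc * (1 + z) = (Qc - NN M) + Pc * h := by linear_combination hQz
    have hAmNp : (Qc - NN M)^p = Qc^(p-1) * (Qc - NN M) :=
      glaisher_pow_of_sq _ _ hAmN p hp1
    obtain ⟨c, hc⟩ := glaisher_pow_add_sq (Qc - NN M) (Pc*h) p hp1
    have e3 : Qc^(p-1) * Qc = Qc^p := by rw [← pow_succ]; congr 1; omega
    set T : BBi M := Qc * ((1+z)^p - 1) + NN M with hT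
    have E : Qc^(p-1) * T
        = (p : BBi M) * (Qc - NN M)^(p-1) * (Pc*h) + (Pc*h)^2 * c := by
      have e4 : Qc^(p-1) * T = Qc^p * (1+z)^p - Qc^p + Qc^(p-1) * NN M := by
        rw [hT, ← e3]; ring
      rw [e4, ← mul_pow, hA, hc, hAmNp]
      linear_combination e3
    set Pc2 : BBi M := ((((p:ℤ)^(k+2) : ℤ)) : BBi M) with hPc2
    have hdvd1 : Pc2 ∣ (p : BBi M) * (Qc - NN M)^(p-1) * (Pc*h) := by
      refine ⟨(Qc - NN M)^(p-1) * h, ?_⟩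
      have : Pc2 = (p : BBi M) * Pc := by rw [hPc2, hPc]; push_cast; ring
      rw [this]; ring
    have hdvd2 : Pc2 ∣ (Pc*h)^2 * c := by
      have h5 : p^(k+2) ∣ p^(2*(k+1)) := pow_dvd_pow _ (by omega)
      have h6 : ((((p:ℤ)^(k+2)) : ℤ) : BBi M) ∣ ((((p:ℤ)^(2*(k+1))) : ℤ) : BBi M) :=
        by exact_mod_cast (Nat.cast_dvd_cast (α := BBi M) h5)
      have h7 : ((((p:ℤ))^(2*(k+1)) : ℤ) : BBi M) = Pc^2 := by
        rw [hPc]; push_cast; ring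
      rw [h7] at h6
      exact Dvd.dvd.mul_right (Dvd.dvd.trans h6 ⟨h^2, by ring⟩) c
    have hdvdE : Pc2 ∣ Qc^(p-1) * T := by rw [E]; exact dvd_add hdvd1 hdvd2
    have hcoefE : ∀ g : ZMod M, ((p:ℤ))^(k+2) ∣ ((M:ℤ))^(p-1) * T.coeff g := by
      intro g
      have h8 : Qc^(p-1) * T = ((((M:ℤ))^(p-1) : ℤ) : BBi M) * T := by
        rw [hQc]; push_cast; ring
      have h9 := (glaisher_cast_dvd_iff M _ _).1 hdvdE g
      rwa [h8, glaisher_coeff_mul] at h9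
    have hcopk : IsCoprime (((p:ℤ))^(k+2)) (((M:ℤ))^(p-1)) := hcop.pow
    have hTdvd : ((((p:ℤ)^(k+2) : ℤ)) : BBi M) ∣ T := by
      rw [glaisher_cast_dvd_iff]
      intro g
      exact hcopk.dvd_of_dvd_mul_left ⟨_, (hcoefE g).choose_spec⟩
    have hfin : T = (M:ℤ) • ((xx M)^(M * p^(k+1)) - 1) + NN M := by
      have h12 : (1 + z) = (xx M)^(M * p^k) := by rw [hz]; ring
      have h13 : (1+z)^p = (xx M)^(M * p^(k+1)) := by
        rw [h12, ← pow_mul]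
        congr 1
        rw [pow_succ]; ring
      rw [hT, h13, zsmul_eq_mul, ← hQc]
    rw [← hfin]
    exact hTdvd

lemma glaisher_key (hM2 : 2 ∣ M) (hM1 : 1 < M)
    (hX : (1 + single 1 1 : BBp M p)^(M+1) = 1 + single 1 1)
    (hMp : ((M:ℤ) : ZMod p) = -1) (hcop : IsCoprime ((p:ℤ)) ((M:ℤ))) (hp1 : 1 ≤ p)
    (k : ℕ) :
    ((((p:ℤ)^(k+1) : ℤ)) : BBi M) ∣ (xx M) * ((xx M)^(M * p^k) - 1) := by
  obtain ⟨h, hh⟩ := glaisher_claim M p hM2 hM1 hX hMp hcop hp1 k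
  set z : BBi M := (xx M)^(M * p^k) - 1 with hz
  have h1 : (((M:ℤ)) : BBi M) * (xx M * z)
      = ((((p:ℤ)^(k+1) : ℤ)) : BBi M) * (xx M * h) := by
    have h2 : xx M * ((M:ℤ) • z + NN M)
        = (((M:ℤ)) : BBi M) * (xx M * z) + xx M * NN M := by
      rw [zsmul_eq_mul]; ring
    rw [glaisher_x_mul_N M hM2 hM1, add_zero] at h2
    rw [← h2, hh]; ring
  rw [glaisher_cast_dvd_iff]
  intro g
  have l := glaisher_coeff_mul M ((M:ℤ)) (xx M * z) g
  have r := glaisher_coeff_mul M ((p:ℤ)^(k+1)) (xx M * h) g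
  have h3 : (M:ℤ) * ((xx M * z).coeff g) = ((p:ℤ))^(k+1) * ((xx M * h).coeff g) := by
    rw [← l, ← r]
    exact congrArg (fun y : BBi M => y.coeff g) h1
  exact (IsCoprime.pow_left hcop).dvd_of_dvd_mul_left ⟨_, h3⟩

lemma glaisher_shift (hM2 : 2 ∣ M) (hM1 : 1 < M)
    (hX : (1 + single 1 1 : BBp M p)^(M+1) = 1 + single 1 1)
    (hMp : ((M:ℤ) : ZMod p) = -1) (hcop : IsCoprime ((p:ℤ)) ((M:ℤ))) (hp1 : 1 ≤ p)
    (k a : ℕ) (ha : 1 ≤ a) :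
    ∀ t : ℕ, ((((p:ℤ)^(k+1) : ℤ)) : BBi M) ∣ ((xx M)^(a + t*(M * p^k)) - (xx M)^a) := by
  intro t
  induction t with
  | zero => simp
  | succ t ih =>
    have hb : 1 ≤ a + t*(M*p^k) := le_trans ha (by omega)
    set b := a + t*(M*p^k) with hbdef
    have h1 : a + (t+1)*(M*p^k) = b + M*p^k := by rw [hbdef]; ring
    rw [h1]
    have h2 : (xx M)^(b + M*p^k) - (xx M)^a
        = ((xx M)^(b + M*p^k) - (xx M)^b) + ((xx M)^b - (xx M)^a) := by ring
    rw [h2]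
    refine dvd_add ?_ ih
    have h3 : (xx M)^(b + M*p^k) - (xx M)^b
        = (xx M)^(b-1) * ((xx M) * ((xx M)^(M*p^k) - 1)) := by
      have hb1 : b = (b-1) + 1 := by omega
      calc (xx M)^(b + M*p^k) - (xx M)^b
          = (xx M)^((b-1) + 1 + M*p^k) - (xx M)^((b-1)+1) := by rw [← hb1]
        _ = (xx M)^(b-1) * ((xx M) * ((xx M)^(M*p^k) - 1)) := by
            rw [pow_add, pow_add, pow_one]; ring
    rw [h3]
    exact Dvd.dvd.mul_left (glaisher_key M p hM2 hM1 hX hMp hcop hp1 k) _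
end Part3
section Part4
open AddMonoidAlgebra
variable (M p : ℕ) [NeZero M] [Fact p.Prime]

lemma glaisher_coeff_pow_s18 (a : ℕ) (g : ZMod M) :
    ((xx M)^a).coeff g
      = ∑ c ∈ Finset.range (a+1), if ((c:ℕ) : ZMod M) = g then (a.choose c : ℤ) else 0 := by
  have hx : xx M = single 1 1 + 1 := by unfold xx; ring
  rw [hx, add_pow]
  have hterm : ∀ c : ℕ, (single 1 (1:ℤ) : BBi M)^c * 1^(a-c) * (a.choose c : BBi M)
      = single ((c:ℕ) : ZMod M) ((a.choose c : ℤ)) := by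
    intro c
    rw [one_pow, mul_one, single_pow, one_pow, natCast_def, single_mul_single, add_zero,
      one_mul]
    congr 1
    rw [nsmul_eq_mul, mul_one]
  rw [Finset.sum_congr rfl fun c _ => hterm c]
  rw [show ((∑ c ∈ Finset.range (a+1), single ((c:ℕ) : ZMod M) ((a.choose c : ℤ)) : BBi M).coeff g)
      = ∑ c ∈ Finset.range (a+1), (single ((c:ℕ) : ZMod M) ((a.choose c : ℤ)) : BBi M).coeff g
    from by rw [AddMonoidAlgebra.coeff_sum, Finset.sum_apply']]
  exact Finset.sum_congr rfl fun c _ => by rw [AddMonoidAlgebra.coeff_single, Finsupp.single_apply]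
end Part4
section Final
open AddMonoidAlgebra

theorem glaisher_prime_power_mod_le (p f q k a abar : ℕ) (r : ℤ) (hp : p.Prime)
    (hodd : Odd p) (hf : 0 < f) (hq : q = p ^ f)
    (ha : 0 < a) (hle : a ≤ abar)
    (hcong : a ≡ abar [MOD (q - 1) * p ^ k]) :
    (∑ c ∈ Finset.range (a + 1),
        if ((q : ℤ) - 1) ∣ (c : ℤ) - r then (a.choose c : ℤ) else 0)
      ≡ (∑ c ∈ Finset.range (abar + 1),
        if ((q : ℤ) - 1) ∣ (c : ℤ) - r then (abar.choose c : ℤ) else 0)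
      [ZMOD (p : ℤ) ^ (k + 1)] := by
  haveI : Fact p.Prime := ⟨hp⟩
  have hp3 : 3 ≤ p := by
    rcases hp.two_le.lt_or_eq with h | h
    · omega
    · exfalso; rw [← h] at hodd; exact (Nat.not_odd_iff_even.2 (by decide)) hodd
  have hq3 : 3 ≤ q := by
    rw [hq]
    calc 3 ≤ p := hp3
      _ = p^1 := (pow_one p).symm
      _ ≤ p^f := Nat.pow_le_pow_right (by omega) hf
  set M : ℕ := q - 1 with hM
  haveI : NeZero M := ⟨by omega⟩
  have hM1 : 1 < M := by omega
  have hqodd : Odd q := by rw [hq]; exact hodd.pow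
  have hM2 : 2 ∣ M := by
    have := Nat.odd_iff.1 hqodd
    omega
  have hqp0 : ((q:ℕ) : ZMod p) = 0 := by
    rw [hq]
    push_cast
    rw [ZMod.natCast_self]
    exact zero_pow (by omega)
  have hMp : ((M:ℤ) : ZMod p) = -1 := by
    have h1 : ((M:ℕ) : ZMod p) = ((q:ℕ) : ZMod p) - 1 := by
      rw [hM, Nat.cast_sub (by omega)]
      simp
    rw [Int.cast_natCast, h1, hqp0]
    ring
  have hX : (1 + single 1 1 : BBp M p)^(M+1) = 1 + single 1 1 := by
    have h2 : M + 1 = p^f := by omega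
    rw [h2, glaisher_frob_pow]
    congr 1
    have h3 : ((p^f : ℕ) : ZMod M) = ((M+1 : ℕ) : ZMod M) := by rw [← h2]
    rw [h3]
    push_cast
    rw [ZMod.natCast_self]
    simp
  have hpM : ¬ p ∣ M := by
    intro hdvd
    have hpq : p ∣ q := by rw [hq]; exact dvd_pow_self p hf.ne'
    have : p ∣ 1 := by
      have := Nat.dvd_sub hpq hdvd
      rwa [show q - M = 1 by omega] at this
    exact absurd (Nat.le_of_dvd one_pos this) (by omega)
  have hcop : IsCoprime ((p:ℤ)) ((M:ℤ)) := by
    rw [Int.isCoprime_iff_gcd_eq_one, Int.gcd_natCast_natCast]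
    exact (Nat.Prime.coprime_iff_not_dvd hp).2 hpM
  have hp1 : 1 ≤ p := by omega
  -- decompose abar
  have hd : M * p^k ∣ abar - a := by
    have := (Nat.modEq_iff_dvd' hle).1 hcong
    rwa [hM]
  obtain ⟨t, ht⟩ := hd
  have habar_eq : abar = a + t * (M * p^k) := by
    have h4 : M * p^k * t + a = abar := by rw [← ht]; exact Nat.sub_add_cancel hle
    rw [← h4]; ring
  -- key divisibility
  have hxd := glaisher_shift M p hM2 hM1 hX hMp hcop hp1 k a ha t
  set gr : ZMod M := ((r : ℤ) : ZMod M) with hgr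
  have hg := (glaisher_cast_dvd_iff M _ _).1 hxd gr
  have hsub : ((xx M)^(a + t*(M * p^k)) - (xx M)^a).coeff gr
      = ((xx M)^abar).coeff gr - ((xx M)^a).coeff gr := by
    rw [habar_eq]
    rfl
  rw [hsub] at hg
  -- identify the sums with coefficients
  have hcond : ∀ c : ℕ, (((c:ℕ) : ZMod M) = gr) ↔ (((q:ℤ)-1) ∣ (c:ℤ)-r) := by
    intro c
    have h1 : ((q:ℤ)-1) = ((M:ℕ):ℤ) := by
      rw [hM, Nat.cast_sub (by omega)]
      simp
    rw [h1, ← ZMod.intCast_zmod_eq_zero_iff_dvd, Int.cast_sub, sub_eq_zero,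
      Int.cast_natCast, hgr]
  have hsum : ∀ b : ℕ, ((xx M)^b).coeff gr
      = ∑ c ∈ Finset.range (b + 1),
          if ((q : ℤ) - 1) ∣ (c : ℤ) - r then (b.choose c : ℤ) else 0 := by
    intro b
    rw [glaisher_coeff_pow_s18]
    exact Finset.sum_congr rfl fun c _ => if_congr (hcond c) rfl rfl
  rw [Int.ModEq]
  have h6 : ((p:ℤ))^(k+1) ∣
      (∑ c ∈ Finset.range (abar + 1),
        if ((q : ℤ) - 1) ∣ (c : ℤ) - r then (abar.choose c : ℤ) else 0)
      - (∑ c ∈ Finset.range (a + 1),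
        if ((q : ℤ) - 1) ∣ (c : ℤ) - r then (a.choose c : ℤ) else 0) := by
    rw [← hsum, ← hsum]
    exact hg
  exact (Int.modEq_iff_dvd.2 h6)

/-- Extension of Glaisher's congruence to prime power moduli: for `p` odd, `q = p^f`,
`p^k ∣ a, abar` and `a ≡ abar (mod (q-1) p^k)`,
`∑_b binom(a, b(q-1)+r) ≡ ∑_b binom(abar, b(q-1)+r) (mod p^(k+1))`. -/
theorem glaisher_prime_power_mod (p f q k a abar : ℕ) (r : ℤ) (hp : p.Prime)
    (hodd : Odd p) (hf : 0 < f) (hq : q = p ^ f)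
    (ha : 0 < a) (habar : 0 < abar) (hka : p ^ k ∣ a) (hkabar : p ^ k ∣ abar)
    (hcong : a ≡ abar [MOD (q - 1) * p ^ k]) :
    (∑ c ∈ Finset.range (a + 1),
        if ((q : ℤ) - 1) ∣ (c : ℤ) - r then (a.choose c : ℤ) else 0)
      ≡ (∑ c ∈ Finset.range (abar + 1),
        if ((q : ℤ) - 1) ∣ (c : ℤ) - r then (abar.choose c : ℤ) else 0)
      [ZMOD (p : ℤ) ^ (k + 1)] := by
  rcases le_total a abar with h | h
  · exact glaisher_prime_power_mod_le p f q k a abar r hp hodd hf hq ha h hcong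
  · exact (glaisher_prime_power_mod_le p f q k abar a r hp hodd hf hq habar h
      hcong.symm).symm

end Final
end

section
/- Let p = 3 and let k >= 0 and s >= 1 with a = s*3^k. Then (2^a - (-1)^a)/3^(k+1) is an integer congruent modulo 3 to s*(1+delta)/2 taken in Z/3, where delta = 1 if 2 divides s-1 and delta = 0 otherwise; more precisely, 2*(2^(s*3^k) - (-1)^s) / 3^(k+1) ≡ s*(1+delta) (mod 3). -/
/-! Write `2 ^ 3 ^ k = -1 + 3 ^ (k + 1) * m`; cubing shows inductively that `m ≡ 1 (mod 3)`.
Expanding `(-1 + 3 ^ (k + 1) * m) ^ s` to first order modulo `3 ^ (2k + 2)` then gives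
`E ≡ s (-1) ^ (s - 1) m ≡ s (-1) ^ (s - 1) (mod 3)`, and `2 (-1) ^ n ≡ 1 + δ (mod 3)`
according to the parity of `n = s - 1`. -/

theorem three_pow_succ_modEq_zero (k : ℕ) : (3 : ℤ) ^ (k + 1) ≡ 0 [ZMOD 3] :=
  Int.modEq_zero_iff_dvd.mpr (dvd_pow_self 3 k.succ_ne_zero)

theorem two_pow_three_pow_eq (k : ℕ) :
    ∃ m : ℤ, (2 : ℤ) ^ 3 ^ k = -1 + 3 ^ (k + 1) * m ∧ m ≡ 1 [ZMOD 3] := by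
  induction k with
  | zero => exact ⟨1, by norm_num, rfl⟩
  | succ k ih =>
    obtain ⟨m, hx, hm⟩ := ih
    refine ⟨m - 3 ^ (k + 1) * m ^ 2 + 3 ^ (2 * k + 1) * m ^ 3, ?_, ?_⟩
    · rw [pow_succ 3 k, pow_mul, hx]
      ring
    · calc m - 3 ^ (k + 1) * m ^ 2 + 3 ^ (2 * k + 1) * m ^ 3
          ≡ m - 0 * m ^ 2 + 0 * m ^ 3 [ZMOD 3] := by
            gcongr
            · exact three_pow_succ_modEq_zero k
            · exact three_pow_succ_modEq_zero (2 * k)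
        _ = m := by ring
        _ ≡ 1 [ZMOD 3] := hm

theorem neg_one_add_pow_eq {R : Type*} [CommRing R] (c : R) (n : ℕ) :
    ∃ t : R, (-1 + c) ^ n = (-1) ^ n + n * (-1) ^ (n - 1) * c + c ^ 2 * t := by
  obtain ⟨t, ht⟩ := sq_dvd_add_pow_sub_sub c (-1) n
  exact ⟨t, by rw [← ht]; ring⟩

theorem two_mul_neg_one_pow_modEq (n : ℕ) :
    2 * (-1 : ℤ) ^ n ≡ 1 + (if 2 ∣ n then 1 else 0) [ZMOD 3] := by
  rcases Nat.even_or_odd n with he | ho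
  · rw [he.neg_one_pow, if_pos he.two_dvd]
    rfl
  · rw [ho.neg_one_pow, if_neg (Nat.not_even_iff_odd.mpr ho ∘ even_iff_two_dvd.mpr)]
    decide

theorem carlitz_sharper_three_general (k s : ℕ) :
    ((3 : ℤ) ^ (k + 1) ∣ 2 ^ (s * 3 ^ k) - (-1 : ℤ) ^ s) ∧
    ∀ E : ℤ, (2 : ℤ) ^ (s * 3 ^ k) - (-1 : ℤ) ^ s = 3 ^ (k + 1) * E →
      2 * E ≡ (s : ℤ) * (1 + (if 2 ∣ s - 1 then 1 else 0)) [ZMOD 3] := by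
  obtain ⟨m, hx, hm⟩ := two_pow_three_pow_eq k
  obtain ⟨t, ht⟩ := neg_one_add_pow_eq (3 ^ (k + 1) * m) s
  have key : (2 : ℤ) ^ (s * 3 ^ k) - (-1) ^ s =
      3 ^ (k + 1) * (s * (-1) ^ (s - 1) * m + 3 ^ (k + 1) * m ^ 2 * t) := by
    rw [mul_comm s, pow_mul, hx, ht]
    ring
  refine ⟨⟨_, key⟩, fun E hE => ?_⟩
  have hE' : E = s * (-1) ^ (s - 1) * m + 3 ^ (k + 1) * m ^ 2 * t :=
    mul_left_cancel₀ (by positivity) (hE.symm.trans key)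
  calc 2 * E ≡ 2 * (s * (-1) ^ (s - 1) * 1 + 0 * m ^ 2 * t) [ZMOD 3] := by
        rw [hE']; gcongr; exact three_pow_succ_modEq_zero k
    _ = s * (2 * (-1) ^ (s - 1)) := by ring
    _ ≡ s * (1 + (if 2 ∣ s - 1 then 1 else 0)) [ZMOD 3] := by
        gcongr; exact two_mul_neg_one_pow_modEq (s - 1)

/-- The case `p = 3` of Carlitz's sharper congruence: `(2^(s 3^k) - (-1)^s)/3^(k+1)` is
an integer `E` with `2 E ≡ s (1 + δ) (mod 3)`, where `δ = 1` if `2 ∣ s - 1`, else `0`. -/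
theorem carlitz_sharper_three (k s : ℕ) (hs : 0 < s) :
    ((3 : ℤ) ^ (k + 1) ∣ 2 ^ (s * 3 ^ k) - (-1 : ℤ) ^ s) ∧
    ∀ E : ℤ, (2 : ℤ) ^ (s * 3 ^ k) - (-1 : ℤ) ^ s = 3 ^ (k + 1) * E →
      2 * E ≡ (s : ℤ) * (1 + (if 2 ∣ s - 1 then 1 else 0)) [ZMOD 3] :=
  carlitz_sharper_three_general k s
end
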